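/- arXiv:math/0408231 — 12 statements merged into one kernel-verified Lean document; each statement's English description precedes it below -/
import Mathlib

section
/- Let G be a connected MS-graph and let f and f' be two framings of G, each of which assigns the value ∞ to at least one edge. Then f and f' are equivalent if and only if the set of edges with framing ∞ under f coincides with the set of edges with framing ∞ under f'. -/
/-- A directed multigraph with finite vertex and edge sets. -/
structure MSGraph where
  V : Type
  E : Type
  [fintV : Fintype V]
  [decV : DecidableEq V]
  [fintE : Fintype E]
  [decE : DecidableEq E]
  src : E → V
  tgt : E → V

namespace MSGraph

attribute [instance] fintV decV fintE decE

/-- A vertex is a source if it is the terminal vertex of no edge. -/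
def IsSource (G : MSGraph) (v : G.V) : Prop := ∀ e, G.tgt e ≠ v

/-- A vertex is a sink if it is the initial vertex of no edge. -/
def IsSink (G : MSGraph) (v : G.V) : Prop := ∀ e, G.src e ≠ v

/-- A saddle is a vertex that is neither a source nor a sink. -/
def IsSaddle (G : MSGraph) (v : G.V) : Prop := ¬ G.IsSource v ∧ ¬ G.IsSink v

/-- MS-graph condition: for every edge, at least one endpoint is a source or a sink. -/
def IsMS (G : MSGraph) : Prop :=
  ∀ e, (G.IsSource (G.src e) ∨ G.IsSink (G.src e)) ∨
       (G.IsSource (G.tgt e) ∨ G.IsSink (G.tgt e))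

/-- Two distinct edges are sequential if the terminal vertex of one is the
initial vertex of the other. -/
def Sequential (G : MSGraph) (e e' : G.E) : Prop :=
  e ≠ e' ∧ (G.tgt e = G.src e' ∨ G.tgt e' = G.src e)

/-- Two distinct edges are incident if they share an endpoint. -/
def Incident (G : MSGraph) (e e' : G.E) : Prop :=
  e ≠ e' ∧ (G.src e = G.src e' ∨ G.src e = G.tgt e' ∨
            G.tgt e = G.src e' ∨ G.tgt e = G.tgt e')

/-- Adjacency in the underlying undirected graph. -/
def Adj (G : MSGraph) (v w : G.V) : Prop :=
  ∃ e, (G.src e = v ∧ G.tgt e = w) ∨ (G.src e = w ∧ G.tgt e = v)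

/-- The underlying undirected graph is connected. -/
def Connected (G : MSGraph) : Prop :=
  Nonempty G.V ∧ ∀ v w : G.V, Relation.ReflTransGen G.Adj v w

/-- One elementary operation on framings: (1) add an integer `k` to the framings of two
sequential edges; (2) add `k` to the framing of one edge and `-k` to the framing of an
incident edge that is not sequential with it.  (In `WithTop ℤ` one has `⊤ + k = ⊤`.) -/
def Step (G : MSGraph) (f f' : G.E → WithTop ℤ) : Prop :=
  (∃ (k : ℤ) (e e' : G.E), G.Sequential e e' ∧
    f' = fun x => if x = e ∨ x = e' then f x + (k : WithTop ℤ) else f x) ∨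
  (∃ (k : ℤ) (e e' : G.E), G.Incident e e' ∧ ¬ G.Sequential e e' ∧
    f' = fun x => if x = e then f x + (k : WithTop ℤ)
          else if x = e' then f x + ((-k : ℤ) : WithTop ℤ) else f x)

/-- Two framings are equivalent if one is obtained from the other by a finite
sequence of elementary operations. -/
def FramingEquiv (G : MSGraph) (f f' : G.E → WithTop ℤ) : Prop :=
  Relation.ReflTransGen G.Step f f'

/-- The edge `e` joins `v` and `w` in the underlying undirected graph. -/
def EdgeJoins (G : MSGraph) (e : G.E) (v w : G.V) : Prop :=
  (G.src e = v ∧ G.tgt e = w) ∨ (G.src e = w ∧ G.tgt e = v)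

/-- A closed walk in the underlying undirected graph: a cyclically ordered sequence of
edges `e₁, …, e_m` and vertices `v₁, …, v_m` such that `e_i` joins `v_i` to `v_{i+1}`. -/
structure ClosedWalk (G : MSGraph) where
  m : ℕ
  pos : 0 < m
  vert : ZMod m → G.V
  edge : ZMod m → G.E
  joins : ∀ i, G.EdgeJoins (edge i) (vert i) (vert (i + 1))

/-- A saddle passage of a closed walk at index `i`: of the two walk edges meeting at the
common vertex `v_{i+1}`, one is directed into it and the other is directed out of it. -/
def ClosedWalk.SaddleAt {G : MSGraph} (w : G.ClosedWalk) (i : ZMod w.m) : Prop :=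
  (G.tgt (w.edge i) = w.vert (i + 1) ∧ G.src (w.edge (i + 1)) = w.vert (i + 1)) ∨
  (G.src (w.edge i) = w.vert (i + 1) ∧ G.tgt (w.edge (i + 1)) = w.vert (i + 1))

/-- A cycle is a closed walk with no repeated edges and no repeated vertices. -/
def ClosedWalk.IsCycle {G : MSGraph} (w : G.ClosedWalk) : Prop :=
  Function.Injective w.edge ∧ Function.Injective w.vert

/-- The number of saddle passages of a closed walk. -/
noncomputable def ClosedWalk.saddleCount {G : MSGraph} (w : G.ClosedWalk) : ℕ :=
  Nat.card {i : ZMod w.m // w.SaddleAt i}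

/-- A partition of the edge set into two groups such that sequential edges lie in distinct
groups and incident non-sequential edges lie in the same group. -/
def IsGroupPartition (G : MSGraph) (g : G.E → Bool) : Prop :=
  (∀ e e', G.Sequential e e' → g e ≠ g e') ∧
  (∀ e e', G.Incident e e' → ¬ G.Sequential e e' → g e = g e')

end MSGraph

namespace MSGraph

/-- A step can add `k` to one edge and `s*k` to an incident edge, `s = ±1`. -/
lemma step_add (G : MSGraph) (f : G.E → WithTop ℤ) {e e' : G.E} (h : G.Incident e e')
    (k : ℤ) : ∃ s : ℤ, G.Step f
      (fun x => if x = e then f x + (k : WithTop ℤ)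
        else if x = e' then f x + ((s * k : ℤ) : WithTop ℤ) else f x) := by
  by_cases hseq : G.Sequential e e'
  · refine ⟨1, Or.inl ⟨k, e, e', hseq, ?_⟩⟩
    funext x
    by_cases hx : x = e
    · simp [hx]
    · by_cases hx' : x = e'
      · simp [hx, hx']
      · simp [hx, hx']
  · refine ⟨-1, Or.inr ⟨k, e, e', h, hseq, ?_⟩⟩
    funext x
    by_cases hx : x = e
    · simp [hx]
    · by_cases hx' : x = e'
      · simp [hx, hx', neg_one_mul]
      · simp [hx, hx']

/-- Transfer: if there is a chain of incident edges from `a` to an edge `b` with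
framing `⊤`, then we can add any integer to the framing of `a` alone. -/
lemma transfer (G : MSGraph) {a b : G.E} (hab : Relation.ReflTransGen G.Incident a b) :
    ∀ f : G.E → WithTop ℤ, f b = ⊤ → ∀ k : ℤ,
      G.FramingEquiv f (fun x => if x = a then f x + (k : WithTop ℤ) else f x) := by
  induction hab using Relation.ReflTransGen.head_induction_on with
  | refl =>
    intro f hb k
    have : (fun x => if x = b then f x + (k : WithTop ℤ) else f x) = f := by
      funext x
      by_cases hx : x = b
      · simp [hx, hb]
      · simp [hx]
    rw [this]
    exact Relation.ReflTransGen.refl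
  | @head a c hac _ ih =>
    intro f hb k
    obtain ⟨s, hstep⟩ := G.step_add f hac k
    set f₁ : G.E → WithTop ℤ := fun x => if x = a then f x + (k : WithTop ℤ)
        else if x = c then f x + ((s * k : ℤ) : WithTop ℤ) else f x with hf₁
    have hf₁b : f₁ b = ⊤ := by
      simp only [hf₁]
      split <;> simp [hb] <;> split <;> simp [hb]
    have hne : a ≠ c := hac.1
    have h2 := ih f₁ hf₁b (-(s * k))
    have heq : (fun x => if x = c then f₁ x + ((-(s * k) : ℤ) : WithTop ℤ) else f₁ x)
        = (fun x => if x = a then f x + (k : WithTop ℤ) else f x) := by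
      funext x
      by_cases hxc : x = c
      · subst hxc
        have hxa : x ≠ a := Ne.symm hne
        have hfx : f₁ x = f x + ((s * k : ℤ) : WithTop ℤ) := by simp [hf₁, hxa]
        rw [if_pos rfl, if_neg hxa, hfx, add_assoc, ← WithTop.coe_add, add_neg_cancel,
          WithTop.coe_zero, add_zero]
      · by_cases hxa : x = a
        · simp [hf₁, hxa, hxc, hne]
        · simp [hf₁, hxa, hxc]
    rw [heq] at h2
    exact Relation.ReflTransGen.head hstep h2

/-- Two edges sharing a vertex are connected in the incidence graph. -/
lemma share_vertex (G : MSGraph) {a b : G.E} {v : G.V}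
    (ha : G.src a = v ∨ G.tgt a = v) (hb : G.src b = v ∨ G.tgt b = v) :
    Relation.ReflTransGen G.Incident a b := by
  by_cases hab : a = b
  · rw [hab]
  · refine Relation.ReflTransGen.single ⟨hab, ?_⟩
    rcases ha with ha | ha <;> rcases hb with hb | hb <;> rw [ha, hb] <;> tauto

/-- In a connected graph, any two edges are connected in the incidence graph. -/
lemma edge_conn (G : MSGraph) (hconn : G.Connected) (a b : G.E) :
    Relation.ReflTransGen G.Incident a b := by
  have key : ∀ v w : G.V, Relation.ReflTransGen G.Adj v w →
      ∀ a b : G.E, (G.src a = v ∨ G.tgt a = v) → (G.src b = w ∨ G.tgt b = w) →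
      Relation.ReflTransGen G.Incident a b := by
    intro v w hvw
    induction hvw using Relation.ReflTransGen.head_induction_on with
    | refl => intro a b ha hb; exact G.share_vertex ha hb
    | @head v v' hadj _ ih =>
      intro a b ha hb
      obtain ⟨c, hc⟩ := hadj
      have hcv : G.src c = v ∨ G.tgt c = v := by tauto
      have hcv' : G.src c = v' ∨ G.tgt c = v' := by tauto
      exact (G.share_vertex ha hcv).trans (ih c b hcv' hb)
  exact key (G.src a) (G.src b) (hconn.2 _ _) a b (Or.inl rfl) (Or.inl rfl)

/-- A step preserves the set of edges with framing `⊤`. -/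
lemma step_top_set (G : MSGraph) {f f' : G.E → WithTop ℤ} (h : G.Step f f') :
    {e : G.E | f e = ⊤} = {e : G.E | f' e = ⊤} := by
  rcases h with ⟨k, e, e', _, rfl⟩ | ⟨k, e, e', _, _, rfl⟩ <;>
    · ext x
      simp only [Set.mem_setOf_eq]
      split_ifs <;> simp [WithTop.add_eq_top]

end MSGraph

/-- Two framings, each taking the value `∞` somewhere, of a connected MS-graph are
equivalent iff their sets of edges with framing `∞` coincide. -/
theorem framings_with_top_equiv_iff (G : MSGraph) (hMS : G.IsMS) (hconn : G.Connected)
    (f f' : G.E → WithTop ℤ) (hf : ∃ e, f e = ⊤) (hf' : ∃ e, f' e = ⊤) :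
    G.FramingEquiv f f' ↔ {e : G.E | f e = ⊤} = {e : G.E | f' e = ⊤} := by
  constructor
  · intro h
    clear hf hf'
    induction h with
    | refl => rfl
    | tail _ hstep ih => exact ih.trans (G.step_top_set hstep)
  · intro hset
    obtain ⟨e₀, he₀⟩ := hf
    have he₀' : f' e₀ = ⊤ := by
      have := Set.ext_iff.mp hset e₀
      simpa [he₀] using this
    -- interpolating family
    set g : Finset G.E → G.E → WithTop ℤ :=
      fun S x => if x ∈ S then f' x else f x with hg
    have main : ∀ S : Finset G.E, G.FramingEquiv f (g S) := by
      intro S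
      induction S using Finset.induction_on with
      | empty =>
        have : g ∅ = f := by funext x; simp [hg]
        rw [this]
        exact Relation.ReflTransGen.refl
      | @insert e S heS ih =>
        have hge₀ : g S e₀ = ⊤ := by
          by_cases h : e₀ ∈ S <;> simp [hg, h, he₀, he₀']
        by_cases hfe : f e = ⊤
        · have hfe' : f' e = ⊤ := by
            have := Set.ext_iff.mp hset e
            simpa [hfe] using this
          have : g (insert e S) = g S := by
            funext x
            by_cases hx : x = e
            · simp [hg, hx, heS, hfe, hfe']
            · simp [hg, hx]
          rw [this]; exact ih
        · have hfe' : f' e ≠ ⊤ := by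
            have := Set.ext_iff.mp hset e
            simp only [Set.mem_setOf_eq] at this
            tauto
          obtain ⟨m, hm⟩ := WithTop.ne_top_iff_exists.mp hfe
          obtain ⟨n, hn⟩ := WithTop.ne_top_iff_exists.mp hfe'
          have htr := G.transfer (G.edge_conn hconn e e₀) (g S) hge₀ (n - m)
          have heq : (fun x => if x = e then g S x + ((n - m : ℤ) : WithTop ℤ) else g S x)
              = g (insert e S) := by
            funext x
            by_cases hx : x = e
            · simp only [hx, if_pos rfl, hg, heS, if_neg heS, Finset.mem_insert,
                true_or, if_pos]
              rw [← hm, ← hn, ← WithTop.coe_add]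
              norm_num
            · simp [hg, Finset.mem_insert, hx]
          rw [heq] at htr
          exact ih.trans htr
    have : g Finset.univ = f' := by funext x; simp [hg]
    rw [← this]
    exact main Finset.univ
end

section
/- Let G be a connected MS-graph and let f be a framing of G that assigns ∞ to at least one edge. Then for every edge e with finite framing f(e) = n ∈ ℤ and every integer k, the framing f is equivalent to the framing f' defined by f'(e) = k and f'(e') = f(e') for all edges e' ≠ e. -/
namespace MSGraphAux

open MSGraph

/-- Edge touches vertex. -/
def Touches (G : MSGraph) (a : G.E) (v : G.V) : Prop := G.src a = v ∨ G.tgt a = v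

/-- Two edges share a vertex (possibly equal edges). -/
def ERel (G : MSGraph) (a b : G.E) : Prop := ∃ v, Touches G a v ∧ Touches G b v

lemma incident_of_erel {G : MSGraph} {a b : G.E} (hne : a ≠ b) (h : ERel G a b) :
    G.Incident a b := by
  obtain ⟨v, ha, hb⟩ := h
  refine ⟨hne, ?_⟩
  rcases ha with ha | ha <;> rcases hb with hb | hb <;> subst ha <;>
    simp [hb, MSGraph.Incident]

lemma chain_of_walk (G : MSGraph) {v w : G.V} (h : Relation.ReflTransGen G.Adj v w) :
    ∀ a b, Touches G a v → Touches G b w → Relation.ReflTransGen (ERel G) a b := by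
  induction h with
  | refl => intro a b ha hb; exact Relation.ReflTransGen.single ⟨_, ha, hb⟩
  | @tail u w h1 hadj ih =>
    intro a b ha hb
    obtain ⟨c, hc⟩ := hadj
    have hcu : Touches G c u := by
      rcases hc with ⟨h1', h2'⟩ | ⟨h1', h2'⟩
      · exact Or.inl h1'
      · exact Or.inr h2'
    have hcw : Touches G c w := by
      rcases hc with ⟨h1', h2'⟩ | ⟨h1', h2'⟩
      · exact Or.inr h2'
      · exact Or.inl h1'
    exact (ih a c ha hcu).tail ⟨w, hcw, hb⟩

lemma cancel_aux (t : WithTop ℤ) (c c' : ℤ) (h : c + c' = 0) :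
    t + (c : WithTop ℤ) + (c' : WithTop ℤ) = t := by
  rw [add_assoc, ← WithTop.coe_add, h]
  simp

lemma key (G : MSGraph) (e₀ : G.E) {a : G.E}
    (h : Relation.ReflTransGen (ERel G) a e₀) :
    ∀ (g : G.E → WithTop ℤ), g e₀ = ⊤ → ∀ d : ℤ,
      G.FramingEquiv g (fun x => if x = a then g x + (d : WithTop ℤ) else g x) := by
  induction h using Relation.ReflTransGen.head_induction_on with
  | refl =>
    intro g hg d
    have : (fun x => if x = e₀ then g x + (d : WithTop ℤ) else g x) = g := by
      funext x
      split_ifs with hx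
      · subst hx; rw [hg]; simp
      · rfl
    rw [this]
    exact Relation.ReflTransGen.refl
  | @head a b hab hch ih =>
    intro g hg d
    by_cases hEq : a = b
    · subst hEq; exact ih g hg d
    have hinc : G.Incident a b := incident_of_erel hEq hab
    by_cases hseq : G.Sequential a b
    · -- sequential: add d to both, then remove d from b via chain to e₀
      set g1 : G.E → WithTop ℤ :=
        fun x => if x = a ∨ x = b then g x + (d : WithTop ℤ) else g x with hg1
      have hstep : G.Step g g1 := Or.inl ⟨d, a, b, hseq, rfl⟩
      have hg1top : g1 e₀ = ⊤ := by
        simp only [hg1]; split_ifs <;> simp [hg]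
      have h2 := ih g1 hg1top (-d)
      have heq : (fun x => if x = b then g1 x + ((-d : ℤ) : WithTop ℤ) else g1 x)
          = (fun x => if x = a then g x + (d : WithTop ℤ) else g x) := by
        funext x
        by_cases hxb : x = b
        · subst hxb
          rw [if_pos rfl, if_neg (fun h => hEq h.symm)]
          simp only [hg1]
          rw [if_pos (Or.inr trivial : _ ∨ True)]
          exact cancel_aux _ d (-d) (by ring)
        · rw [if_neg hxb]
          by_cases hxa : x = a
          · subst hxa
            rw [if_pos rfl]
            simp only [hg1]
            rw [if_pos (Or.inl trivial : True ∨ _)]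
          · rw [if_neg hxa]
            simp only [hg1]
            rw [if_neg (by tauto)]
      rw [heq] at h2
      exact Relation.ReflTransGen.head hstep h2
    · -- incident non-sequential: add d to a and -d to b, then restore b
      set g1 : G.E → WithTop ℤ :=
        fun x => if x = a then g x + (d : WithTop ℤ)
          else if x = b then g x + ((-d : ℤ) : WithTop ℤ) else g x with hg1
      have hstep : G.Step g g1 := Or.inr ⟨d, a, b, hinc, hseq, rfl⟩
      have hg1top : g1 e₀ = ⊤ := by
        simp only [hg1]; split_ifs <;> simp [hg]
      have h2 := ih g1 hg1top d
      have heq : (fun x => if x = b then g1 x + (d : WithTop ℤ) else g1 x)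
          = (fun x => if x = a then g x + (d : WithTop ℤ) else g x) := by
        funext x
        by_cases hxb : x = b
        · subst hxb
          rw [if_pos rfl, if_neg (fun h => hEq h.symm)]
          simp only [hg1]
          rw [if_neg (fun h => hEq h.symm), if_pos trivial]
          exact cancel_aux _ (-d) d (by ring)
        · rw [if_neg hxb]
          by_cases hxa : x = a
          · subst hxa
            rw [if_pos rfl]
            simp only [hg1]
            rw [if_pos trivial]
          · rw [if_neg hxa]
            simp only [hg1]
            rw [if_neg hxa, if_neg hxb]
      rw [heq] at h2
      exact Relation.ReflTransGen.head hstep h2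

end MSGraphAux

/-- In a connected MS-graph with a framing taking the value `∞` on some edge, the framing
of any edge with finite framing can be changed to an arbitrary integer, up to equivalence,
without changing the framings of the remaining edges. -/
theorem framing_update_finite_edge_equiv (G : MSGraph) (hMS : G.IsMS) (hconn : G.Connected)
    (f : G.E → WithTop ℤ) (hf : ∃ e₀, f e₀ = ⊤)
    (e : G.E) (n : ℤ) (hfe : f e = (n : WithTop ℤ)) (k : ℤ) :
    G.FramingEquiv f (Function.update f e (k : WithTop ℤ)) := by
  obtain ⟨e₀, he₀⟩ := hf
  have hwalk := hconn.2 (G.src e) (G.src e₀)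
  have hchain : Relation.ReflTransGen (MSGraphAux.ERel G) e e₀ :=
    MSGraphAux.chain_of_walk G hwalk e e₀ (Or.inl rfl) (Or.inl rfl)
  have h := MSGraphAux.key G e₀ hchain f he₀ (k - n)
  have heq : (fun x => if x = e then f x + ((k - n : ℤ) : WithTop ℤ) else f x)
      = Function.update f e (k : WithTop ℤ) := by
    funext x
    rw [Function.update_apply]
    by_cases hx : x = e
    · subst hx
      rw [if_pos rfl, if_pos rfl, hfe, ← WithTop.coe_add]
      norm_num
    · rw [if_neg hx, if_neg hx]
  rwa [heq] at h
end

section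
/- Let G be a connected MS-graph without saddles, let f be an integer framing of G, let e and e₁ be distinct edges of G, and let n be an integer. Then f is equivalent to the framing f' with f'(e₁) = f(e₁) + n, f'(e) = f(e) − n, and f'(e') = f(e') for all edges e' distinct from e and e₁. -/
namespace MSGraph

lemma no_sequential (G : MSGraph) (hns : ∀ v : G.V, ¬ G.IsSaddle v) :
    ∀ e e' : G.E, ¬ G.Sequential e e' := by
  rintro e e' ⟨hne, h | h⟩
  · exact hns (G.tgt e) ⟨fun hs => hs e rfl, fun hs => hs e' h.symm⟩
  · exact hns (G.tgt e') ⟨fun hs => hs e' rfl, fun hs => hs e h.symm⟩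

lemma edge_chain (G : MSGraph) :
    ∀ v w : G.V, Relation.ReflTransGen G.Adj v w →
    ∀ a b : G.E, (G.src a = v ∨ G.tgt a = v) → (G.src b = w ∨ G.tgt b = w) →
    Relation.ReflTransGen G.Incident a b := by
  intro v w h
  induction h using Relation.ReflTransGen.head_induction_on with
  | refl =>
    intro a b ha hb
    by_cases hab : a = b
    · exact hab ▸ Relation.ReflTransGen.refl
    · refine Relation.ReflTransGen.single ⟨hab, ?_⟩
      rcases ha with ha | ha <;> rcases hb with hb | hb <;>
        simp [ha, hb]
  | head hadj _ ih =>
    rename_i v₀ v₁ _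
    intro a b ha hb
    obtain ⟨c, hc⟩ := hadj
    have hcv₀ : G.src c = v₀ ∨ G.tgt c = v₀ := by
      rcases hc with ⟨h1, _⟩ | ⟨_, h2⟩
      · exact Or.inl h1
      · exact Or.inr h2
    have hcv₁ : G.src c = v₁ ∨ G.tgt c = v₁ := by
      rcases hc with ⟨_, h2⟩ | ⟨h1, _⟩
      · exact Or.inr h2
      · exact Or.inl h1
    have hcb := ih c b hcv₁ hb
    by_cases hac : a = c
    · exact hac ▸ hcb
    · refine Relation.ReflTransGen.head ⟨hac, ?_⟩ hcb
      rcases ha with ha | ha <;> rcases hcv₀ with hc0 | hc0 <;> simp [ha, hc0]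

/-- The transfer of `n` from edge `a` to edge `b`. -/
def gfun (G : MSGraph) (a b : G.E) (n : ℤ) (f : G.E → ℤ) : G.E → ℤ :=
  fun x => f x + (if x = b then n else 0) - (if x = a then n else 0)

lemma step_transfer (G : MSGraph) (hns : ∀ v : G.V, ¬ G.IsSaddle v)
    (a c : G.E) (hinc : G.Incident a c) (f : G.E → ℤ) (n : ℤ) :
    G.Step (fun x => ((f x : ℤ) : WithTop ℤ))
      (fun x => ((G.gfun a c n f x : ℤ) : WithTop ℤ)) := by
  refine Or.inr ⟨-n, a, c, hinc, no_sequential G hns a c, ?_⟩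
  have hac : a ≠ c := hinc.1
  funext x
  by_cases h1 : x = a
  · rw [if_pos h1, show G.gfun a c n f x = f x + (-n) by
      simp only [gfun, h1, if_pos rfl, if_neg hac, if_true]; ring, WithTop.coe_add]
  · by_cases h2 : x = c
    · have hca : ¬ c = a := fun hh => h1 (h2.trans hh)
      rw [if_neg h1, if_pos h2, show G.gfun a c n f x = f x + (-(-n)) by
        simp only [gfun, h2, if_pos rfl, if_neg hca, if_true]; ring, WithTop.coe_add]
    · rw [if_neg h1, if_neg h2, show G.gfun a c n f x = f x by simp [gfun, h1, h2]]

lemma equiv_transfer (G : MSGraph) (hns : ∀ v : G.V, ¬ G.IsSaddle v) (n : ℤ) :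
    ∀ a b : G.E, Relation.ReflTransGen G.Incident a b →
    ∀ f : G.E → ℤ, G.FramingEquiv (fun x => ((f x : ℤ) : WithTop ℤ))
      (fun x => ((G.gfun a b n f x : ℤ) : WithTop ℤ)) := by
  intro a b h
  induction h using Relation.ReflTransGen.head_induction_on with
  | refl =>
    intro f
    have : G.gfun b b n f = f := by
      funext x; simp [gfun]
    rw [this]
    exact Relation.ReflTransGen.refl
  | head hinc _ ih =>
    rename_i a c _
    intro f
    have h1 : G.Step (fun x => ((f x : ℤ) : WithTop ℤ))
        (fun x => ((G.gfun a c n f x : ℤ) : WithTop ℤ)) :=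
      step_transfer G hns a c hinc f n
    have h2 := ih (G.gfun a c n f)
    have h3 : G.gfun c b n (G.gfun a c n f) = G.gfun a b n f := by
      funext x
      simp only [gfun]
      split_ifs <;> ring
    rw [h3] at h2
    exact Relation.ReflTransGen.head h1 h2

end MSGraph

/-- In a connected MS-graph without saddles, an integer framing is equivalent to the
framing obtained by adding `n` to the framing of an edge `e₁` and subtracting `n` from the
framing of another edge `e`, the framings of all other edges being unchanged. -/
theorem framing_transfer_equiv_of_no_saddles (G : MSGraph) (hMS : G.IsMS)
    (hconn : G.Connected) (hns : ∀ v : G.V, ¬ G.IsSaddle v)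
    (f : G.E → ℤ) (e e₁ : G.E) (hne : e ≠ e₁) (n : ℤ) :
    G.FramingEquiv (fun x => (f x : WithTop ℤ))
      (fun x => (((if x = e₁ then f x + n else if x = e then f x - n else f x) : ℤ) :
        WithTop ℤ)) := by
  have hchain : Relation.ReflTransGen G.Incident e e₁ :=
    MSGraph.edge_chain G (G.src e) (G.src e₁) (hconn.2 _ _) e e₁ (Or.inl rfl) (Or.inl rfl)
  have h := MSGraph.equiv_transfer G hns n e e₁ hchain f
  have heq : (fun x => ((G.gfun e e₁ n f x : ℤ) : WithTop ℤ)) =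
      (fun x => (((if x = e₁ then f x + n else if x = e then f x - n else f x) : ℤ) :
        WithTop ℤ)) := by
    funext x
    by_cases h1 : x = e₁
    · have h2 : x ≠ e := fun hx => hne ((hx ▸ h1 : e = e₁))
      exact congrArg (fun z : ℤ => (z : WithTop ℤ)) (by simp [MSGraph.gfun, h1, h2, Ne.symm hne])
    · by_cases h2 : x = e
      · exact congrArg (fun z : ℤ => (z : WithTop ℤ)) (by simp [MSGraph.gfun, h1, h2, hne])
      · exact congrArg (fun z : ℤ => (z : WithTop ℤ)) (by simp [MSGraph.gfun, h1, h2])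
  rw [heq] at h
  exact h
end

section
/- Let G be a connected MS-graph without saddles and let e be a fixed edge of G. Then every integer framing f of G is equivalent to the framing that assigns the value Σ_{e' ∈ E} f(e') to the edge e and the value 0 to every other edge. -/
section AuxLemmas

variable {G : MSGraph}

/-- With no saddles, no two edges are sequential. -/
lemma msgraph_no_seq (hns : ∀ v : G.V, ¬ G.IsSaddle v) (a b : G.E) :
    ¬ G.Sequential a b := by
  rintro ⟨hne, h | h⟩
  · exact hns (G.src b) ⟨fun hs => hs a h, fun hk => hk b rfl⟩
  · exact hns (G.src a) ⟨fun hs => hs b h, fun hk => hk a rfl⟩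

/-- In a connected graph, any two edges are connected under the incidence relation. -/
lemma msgraph_edge_reach (hconn : G.Connected) (a b : G.E) :
    Relation.ReflTransGen G.Incident a b := by
  have key : ∀ v w, Relation.ReflTransGen G.Adj v w →
      ∀ a b : G.E, (G.src a = v ∨ G.tgt a = v) → (G.src b = w ∨ G.tgt b = w) →
      Relation.ReflTransGen G.Incident a b := by
    intro v w h
    induction h with
    | refl =>
      intro a b ha hb
      by_cases hab : a = b
      · exact hab ▸ Relation.ReflTransGen.refl
      · refine Relation.ReflTransGen.single ⟨hab, ?_⟩
        rcases ha with h1 | h1 <;> rcases hb with h2 | h2 <;> rw [h1, h2] <;> simp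
    | @tail u w' hvu hadj ih =>
      intro a b ha hb
      obtain ⟨c, hc⟩ := hadj
      have hcu : G.src c = u ∨ G.tgt c = u := by
        rcases hc with ⟨h1, _⟩ | ⟨_, h2⟩
        exacts [Or.inl h1, Or.inr h2]
      have hcw : G.src c = w' ∨ G.tgt c = w' := by
        rcases hc with ⟨_, h2⟩ | ⟨h1, _⟩
        exacts [Or.inr h2, Or.inl h1]
      have h1 := ih a c ha hcu
      by_cases hcb : c = b
      · exact hcb ▸ h1
      · refine h1.tail ⟨hcb, ?_⟩
        rcases hcw with h1' | h1' <;> rcases hb with h2 | h2 <;> rw [h1', h2] <;> simp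
  exact key _ _ (hconn.2 (G.src a) (G.src b)) a b (Or.inl rfl) (Or.inl rfl)

lemma withtop_coe_eq_add {A B k : ℤ} (h : A = B + k) :
    (A : WithTop ℤ) = (B : WithTop ℤ) + (k : WithTop ℤ) := by
  rw [h]; push_cast; ring

/-- One can move an amount `k` from edge `a` to edge `b` whenever `b` is reachable
from `a` under the incidence relation. -/
lemma msgraph_move (hns : ∀ v : G.V, ¬ G.IsSaddle v) (a b : G.E)
    (h : Relation.ReflTransGen G.Incident a b) (f : G.E → ℤ) (k : ℤ) :
    G.FramingEquiv (fun x => ((f x : ℤ) : WithTop ℤ))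
      (fun x => ((f x + (if x = b then k else 0) + (if x = a then -k else 0) : ℤ)
        : WithTop ℤ)) := by
  induction h with
  | refl =>
    have heq : (fun x => ((f x + (if x = a then k else 0) + (if x = a then -k else 0) : ℤ)
        : WithTop ℤ)) = fun x => ((f x : ℤ) : WithTop ℤ) := by
      funext x; congr 1; split_ifs <;> ring
    rw [heq]
    exact Relation.ReflTransGen.refl
  | @tail c b' hac hcb ih =>
    refine ih.tail (Or.inr ⟨-k, c, b', hcb, msgraph_no_seq hns c b', ?_⟩)
    funext x
    by_cases h1 : x = c
    · subst h1
      have hne : x ≠ b' := hcb.1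
      simp only [if_pos rfl, if_neg hne]
      exact withtop_coe_eq_add (by split_ifs <;> ring)
    · by_cases h2 : x = b'
      · subst h2
        simp only [if_pos rfl, if_neg h1, neg_neg]
        exact withtop_coe_eq_add (by split_ifs <;> ring)
      · simp only [if_neg h1, if_neg h2]

end AuxLemmas

/-- In a connected MS-graph without saddles, every integer framing is equivalent to the
framing concentrating the total sum on a fixed edge `e` and assigning `0` elsewhere. -/
theorem framing_equiv_concentrated_of_no_saddles (G : MSGraph) (hMS : G.IsMS)
    (hconn : G.Connected) (hns : ∀ v : G.V, ¬ G.IsSaddle v)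
    (e : G.E) (f : G.E → ℤ) :
    G.FramingEquiv (fun x => (f x : WithTop ℤ))
      (fun x => (((if x = e then ∑ e' : G.E, f e' else 0) : ℤ) : WithTop ℤ)) := by
  classical
  have key : ∀ s : Finset G.E, e ∉ s →
      G.FramingEquiv (fun x => ((f x : ℤ) : WithTop ℤ))
        (fun x => (((if x = e then f e + ∑ a ∈ s, f a else if x ∈ s then 0 else f x) : ℤ)
          : WithTop ℤ)) := by
    intro s
    induction s using Finset.induction_on with
    | empty =>
      intro _
      have heq : (fun x => (((if x = e then f e + ∑ a ∈ (∅ : Finset G.E), f a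
          else if x ∈ (∅ : Finset G.E) then 0 else f x) : ℤ) : WithTop ℤ))
          = fun x => ((f x : ℤ) : WithTop ℤ) := by
        funext x; congr 1
        by_cases hx : x = e <;> simp [hx]
      rw [heq]
      exact Relation.ReflTransGen.refl
    | @insert a s ha ih =>
      intro he
      have hae : a ≠ e := fun h => he (h ▸ Finset.mem_insert_self a s)
      have hes : e ∉ s := fun h => he (Finset.mem_insert_of_mem h)
      set gs : G.E → ℤ := fun x => if x = e then f e + ∑ a ∈ s, f a
        else if x ∈ s then 0 else f x with hgs
      have step := msgraph_move hns a e (msgraph_edge_reach hconn a e) gs (f a)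
      have heq : (fun x => ((gs x + (if x = e then f a else 0) + (if x = a then -(f a) else 0) : ℤ)
          : WithTop ℤ))
          = fun x => (((if x = e then f e + ∑ b ∈ insert a s, f b
              else if x ∈ insert a s then 0 else f x) : ℤ) : WithTop ℤ) := by
        funext x; congr 1
        by_cases hx : x = e
        · subst hx
          simp [hgs, Ne.symm hae, Finset.sum_insert ha]
          ring
        · by_cases hxa : x = a
          · subst hxa
            simp [hgs, hx, ha]
          · by_cases hxs : x ∈ s <;>
              simp [hgs, hx, hxa, hxs, Finset.mem_insert]
      rw [heq] at step
      exact (ih hes).trans step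
  have hfin := key (Finset.univ.erase e) (by simp)
  have heq : (fun x => (((if x = e then f e + ∑ a ∈ Finset.univ.erase e, f a
      else if x ∈ Finset.univ.erase e then 0 else f x) : ℤ) : WithTop ℤ))
      = fun x => (((if x = e then ∑ e' : G.E, f e' else 0) : ℤ) : WithTop ℤ) := by
    funext x; congr 1
    by_cases hx : x = e
    · simp [hx, Finset.add_sum_erase _ f (Finset.mem_univ e)]
    · simp [hx]
  rw [heq] at hfin
  exact hfin
end

section
/- Let G be a connected MS-graph that contains a cycle with an odd number of saddles. Two integer framings f and f' of G are equivalent if and only if Σ_{e ∈ E} f(e) ≡ Σ_{e ∈ E} f'(e) (mod 2). -/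
section Aux

namespace MSGraph

variable {G : MSGraph}

private lemma cancel_top (a : WithTop ℤ) (k : ℤ) :
    a + (k : WithTop ℤ) + -(k : WithTop ℤ) = a := by
  induction a using WithTop.recTopCoe with
  | top => simp
  | coe a =>
    rw [← WithTop.LinearOrderedAddCommGroup.coe_neg, ← WithTop.coe_add, ← WithTop.coe_add]
    norm_num

private lemma cancel_top' (a : WithTop ℤ) (k : ℤ) :
    a + -(k : WithTop ℤ) + (k : WithTop ℤ) = a := by
  have := cancel_top a (-k)
  simpa using this

lemma Step.symm {f f' : G.E → WithTop ℤ} (h : G.Step f f') : G.Step f' f := by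
  rcases h with ⟨k, e, e', hseq, rfl⟩ | ⟨k, e, e', hinc, hns, rfl⟩
  · refine Or.inl ⟨-k, e, e', hseq, ?_⟩
    funext x
    by_cases hx : x = e ∨ x = e' <;> simp [hx, cancel_top]
  · refine Or.inr ⟨-k, e, e', hinc, hns, ?_⟩
    have hne : e ≠ e' := hinc.1
    funext x
    by_cases hx : x = e
    · subst hx; simp [hne, cancel_top]
    · by_cases hx' : x = e'
      · subst hx'; simp [hx, cancel_top', Ne.symm hne]
      · simp [hx, hx']

lemma Step.shift {f f' : G.E → WithTop ℤ} (c : G.E → WithTop ℤ) (h : G.Step f f') :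
    G.Step (fun x => f x + c x) (fun x => f' x + c x) := by
  rcases h with ⟨k, e, e', hseq, rfl⟩ | ⟨k, e, e', hinc, hns, rfl⟩
  · refine Or.inl ⟨k, e, e', hseq, ?_⟩
    funext x
    by_cases hx : x = e ∨ x = e' <;> simp [hx, add_right_comm]
  · refine Or.inr ⟨k, e, e', hinc, hns, ?_⟩
    funext x
    by_cases hx : x = e
    · simp [hx, add_right_comm]
    · by_cases hx' : x = e'
      · subst hx'; simp [hx, add_right_comm]
      · simp [hx, hx']

lemma FramingEquiv.shift {f f' : G.E → WithTop ℤ} (c : G.E → WithTop ℤ)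
    (h : G.FramingEquiv f f') :
    G.FramingEquiv (fun x => f x + c x) (fun x => f' x + c x) := by
  induction h with
  | refl => exact Relation.ReflTransGen.refl
  | tail _ hstep ih => exact ih.tail (hstep.shift c)

lemma FramingEquiv.gsymm {f f' : G.E → WithTop ℤ} (h : G.FramingEquiv f f') :
    G.FramingEquiv f' f := by
  induction h with
  | refl => exact Relation.ReflTransGen.refl
  | tail _ hstep ih => exact Relation.ReflTransGen.trans (Relation.ReflTransGen.single hstep.symm) ih

lemma FramingEquiv.gtrans {f f' f'' : G.E → WithTop ℤ} (h : G.FramingEquiv f f')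
    (h' : G.FramingEquiv f' f'') : G.FramingEquiv f f'' :=
  Relation.ReflTransGen.trans h h'

/-- The coercion of an integer framing. -/
def ZF (G : MSGraph) (f : G.E → ℤ) : G.E → WithTop ℤ := fun e => (f e : WithTop ℤ)

lemma ZF_add (f c : G.E → ℤ) : G.ZF (f + c) = fun x => G.ZF f x + G.ZF c x := by
  funext x
  simp [ZF]

lemma FZ_shift {f f' : G.E → ℤ} (c : G.E → ℤ)
    (h : G.FramingEquiv (G.ZF f) (G.ZF f')) :
    G.FramingEquiv (G.ZF (f + c)) (G.ZF (f' + c)) := by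
  rw [ZF_add, ZF_add]
  exact h.shift (G.ZF c)

/-- The subgroup of differences reachable from `0`. -/
def D (G : MSGraph) : AddSubgroup (G.E → ℤ) where
  carrier := {d | G.FramingEquiv (G.ZF 0) (G.ZF d)}
  zero_mem' := Relation.ReflTransGen.refl
  add_mem' := by
    intro a b ha hb
    have h2 := FZ_shift a hb
    rw [zero_add] at h2
    have : a + b = b + a := add_comm a b
    rw [this]
    exact ha.gtrans h2
  neg_mem' := by
    intro a ha
    have h2 := FZ_shift (-a) ha.gsymm
    rw [add_neg_cancel] at h2
    have : (0 : G.E → ℤ) + -a = -a := zero_add _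
    rw [this] at h2
    exact h2

lemma seq_mem {e e' : G.E} (h : G.Sequential e e') (k : ℤ) :
    Pi.single e k + Pi.single e' k ∈ G.D := by
  refine Relation.ReflTransGen.single (Or.inl ⟨k, e, e', h, ?_⟩)
  have hne : e ≠ e' := h.1
  funext x
  by_cases hx : x = e
  · subst hx; simp [ZF, Pi.single_apply, hne]
  · by_cases hx' : x = e'
    · subst hx'; simp [ZF, Pi.single_apply, hx, Ne.symm hne]
    · simp [ZF, Pi.single_apply, hx, hx']

lemma inc_mem {e e' : G.E} (h : G.Incident e e') (hns : ¬ G.Sequential e e') (k : ℤ) :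
    Pi.single e k + Pi.single e' (-k) ∈ G.D := by
  refine Relation.ReflTransGen.single (Or.inr ⟨k, e, e', h, hns, ?_⟩)
  have hne : e ≠ e' := h.1
  funext x
  by_cases hx : x = e
  · subst hx; simp [ZF, Pi.single_apply, hne]
  · by_cases hx' : x = e'
    · subst hx'; simp [ZF, Pi.single_apply, hx, Ne.symm hne]
    · simp [ZF, Pi.single_apply, hx, hx']


/-- Two edges are related with a plus sign or a minus sign. -/
def Rel (G : MSGraph) (e e' : G.E) : Prop :=
  (∀ k : ℤ, Pi.single e k + Pi.single e' k ∈ G.D) ∨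
  (∀ k : ℤ, Pi.single e k - Pi.single e' k ∈ G.D)

private lemma single_neg' (e : G.E) (k : ℤ) :
    Pi.single e (-k) = (-Pi.single e k : G.E → ℤ) := by
  funext x
  by_cases h : x = e <;> simp [Pi.single_apply, h]

lemma rel_refl (e : G.E) : G.Rel e e := by
  right; intro k
  simp only [sub_self]
  exact zero_mem _

lemma rel_symm {e e' : G.E} (h : G.Rel e e') : G.Rel e' e := by
  rcases h with h | h
  · left; intro k; have := h k; rwa [add_comm] at this
  · right; intro k
    have := neg_mem (h k)
    rwa [neg_sub] at this

lemma rel_trans {e e' e'' : G.E} (h : G.Rel e e') (h' : G.Rel e' e'') : G.Rel e e'' := by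
  rcases h with h | h <;> rcases h' with h' | h'
  · right; intro k
    have h2 := sub_mem (h k) (h' k)
    convert h2 using 1
    abel
  · left; intro k
    have h2 := sub_mem (h k) (h' k)
    convert h2 using 1
    abel
  · left; intro k
    have h2 := add_mem (h k) (h' k)
    convert h2 using 1
    abel
  · right; intro k
    have h2 := add_mem (h k) (h' k)
    convert h2 using 1
    abel

lemma incident_rel {e e' : G.E} (h : G.Incident e e') : G.Rel e e' := by
  by_cases hs : G.Sequential e e'
  · left; intro k; exact seq_mem hs k
  · right; intro k
    have h2 := inc_mem h hs k
    rwa [single_neg', ← sub_eq_add_neg] at h2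

lemma rel_of_shared (e e' : G.E) (v : G.V)
    (he : G.src e = v ∨ G.tgt e = v) (he' : G.src e' = v ∨ G.tgt e' = v) : G.Rel e e' := by
  by_cases h : e = e'
  · subst h; exact G.rel_refl e
  · refine G.incident_rel ⟨h, ?_⟩
    rcases he with h1 | h1 <;> rcases he' with h2 | h2 <;> rw [h1, h2] <;> simp

lemma rel_of_walk {v w : G.V} (h : Relation.ReflTransGen G.Adj v w) :
    ∀ e e', (G.src e = v ∨ G.tgt e = v) → (G.src e' = w ∨ G.tgt e' = w) → G.Rel e e' := by
  induction h with
  | refl => exact fun e e' he he' => G.rel_of_shared e e' _ he he'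
  | @tail b c _ hadj ih =>
    intro e e' he he'
    obtain ⟨e'', h''⟩ := hadj
    have h1 : G.Rel e e'' := by
      refine ih e e'' he ?_
      rcases h'' with ⟨h2, _⟩ | ⟨_, h2⟩
      · exact Or.inl h2
      · exact Or.inr h2
    have h2 : G.Rel e'' e' := by
      refine G.rel_of_shared e'' e' c ?_ he'
      rcases h'' with ⟨_, h3⟩ | ⟨h3, _⟩
      · exact Or.inr h3
      · exact Or.inl h3
    exact rel_trans h1 h2

lemma rel_total (hconn : G.Connected) (e e' : G.E) : G.Rel e e' :=
  G.rel_of_walk (hconn.2 (G.src e) (G.src e')) e e' (Or.inl rfl) (Or.inl rfl)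

lemma no_loop_cycle (hMS : G.IsMS) (w : G.ClosedWalk) (h1 : w.m = 1) : False := by
  haveI : Subsingleton (ZMod w.m) := by rw [h1]; infer_instance
  have hj := w.joins 0
  have hv : w.vert (0 + 1) = w.vert 0 := congrArg w.vert (Subsingleton.elim _ _)
  rw [hv] at hj
  set e := w.edge 0 with he
  have hsrc : G.src e = w.vert 0 := by rcases hj with ⟨h, _⟩ | ⟨h, _⟩ <;> exact h
  have htgt : G.tgt e = w.vert 0 := by rcases hj with ⟨_, h⟩ | ⟨_, h⟩ <;> exact h
  rcases hMS e with (h | h) | (h | h)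
  · exact h e (htgt.trans hsrc.symm)
  · exact h e rfl
  · exact h e rfl
  · exact h e (hsrc.trans htgt.symm)

lemma cycle_index_ne {w : G.ClosedWalk} (hm : 2 ≤ w.m) (i : ZMod w.m) : i ≠ i + 1 := by
  haveI : Fact (1 < w.m) := ⟨hm⟩
  intro h
  exact one_ne_zero (left_eq_add.mp h)

lemma seq_of_saddle {w : G.ClosedWalk} (hc : w.IsCycle) (hm : 2 ≤ w.m)
    (i : ZMod w.m) (hs : w.SaddleAt i) : G.Sequential (w.edge i) (w.edge (i + 1)) := by
  have hne : w.edge i ≠ w.edge (i + 1) := fun h => cycle_index_ne hm i (hc.1 h)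
  rcases hs with ⟨h1, h2⟩ | ⟨h1, h2⟩
  · exact ⟨hne, Or.inl (h1.trans h2.symm)⟩
  · exact ⟨hne, Or.inr (h2.trans h1.symm)⟩

lemma inc_consecutive {w : G.ClosedWalk} (hc : w.IsCycle) (hm : 2 ≤ w.m)
    (i : ZMod w.m) : G.Incident (w.edge i) (w.edge (i + 1)) := by
  have hne : w.edge i ≠ w.edge (i + 1) := fun h => cycle_index_ne hm i (hc.1 h)
  refine ⟨hne, ?_⟩
  have hj1 := w.joins i
  have hj2 := w.joins (i + 1)
  rcases hj1 with ⟨_, h2⟩ | ⟨h1, _⟩ <;> rcases hj2 with ⟨h3, _⟩ | ⟨_, h4⟩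
  · exact Or.inr (Or.inr (Or.inl (h2.trans h3.symm)))
  · exact Or.inr (Or.inr (Or.inr (h2.trans h4.symm)))
  · exact Or.inl (h1.trans h3.symm)
  · exact Or.inr (Or.inl (h1.trans h4.symm))

lemma not_seq_of_not_saddle {w : G.ClosedWalk} (hc : w.IsCycle) (hm : 2 ≤ w.m)
    (i : ZMod w.m) (hns : ¬ w.SaddleAt i) :
    ¬ G.Sequential (w.edge i) (w.edge (i + 1)) := by
  have hab : w.vert i ≠ w.vert (i + 1) := fun h => cycle_index_ne hm i (hc.2 h)
  have hbc : w.vert (i + 1) ≠ w.vert (i + 1 + 1) := fun h => cycle_index_ne hm (i + 1) (hc.2 h)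
  have hj1 := w.joins i
  have hj2 := w.joins (i + 1)
  simp only [ClosedWalk.SaddleAt, not_or, not_and] at hns
  obtain ⟨hns1, hns2⟩ := hns
  rintro ⟨hne, hs | hs⟩ <;>
    rcases hj1 with ⟨h1, h2⟩ | ⟨h1, h2⟩ <;>
    rcases hj2 with ⟨h3, h4⟩ | ⟨h3, h4⟩ <;>
    simp_all [MSGraph.EdgeJoins]

lemma even_saddle_of_partition (w : G.ClosedWalk) (hc : w.IsCycle) (hm : 2 ≤ w.m)
    (g : G.E → Bool) (hg : G.IsGroupPartition g) : ¬ Odd w.saddleCount := by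
  classical
  haveI : NeZero w.m := ⟨by omega⟩
  have key : ∀ i, (if w.SaddleAt i then (1 : ZMod 2) else 0) =
      (if g (w.edge i) then (1 : ZMod 2) else 0) +
      (if g (w.edge (i + 1)) then (1 : ZMod 2) else 0) := by
    intro i
    by_cases hs : w.SaddleAt i
    · have hne := hg.1 _ _ (seq_of_saddle hc hm i hs)
      by_cases hb : g (w.edge i) <;> by_cases hb' : g (w.edge (i + 1)) <;>
        simp_all <;> decide
    · have heq := hg.2 _ _ (inc_consecutive hc hm i) (not_seq_of_not_saddle hc hm i hs)
      by_cases hb : g (w.edge i) <;> by_cases hb' : g (w.edge (i + 1)) <;>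
        simp_all <;> decide
  have hre : ∑ i : ZMod w.m, (if g (w.edge (i + 1)) then (1 : ZMod 2) else 0) =
      ∑ i : ZMod w.m, (if g (w.edge i) then (1 : ZMod 2) else 0) :=
    (Fintype.sum_equiv (Equiv.addRight (1 : ZMod w.m))
      (fun i => if g (w.edge (i + 1)) then (1 : ZMod 2) else 0)
      (fun i => if g (w.edge i) then (1 : ZMod 2) else 0) fun i => rfl)
  have hsum : ∑ i : ZMod w.m, (if w.SaddleAt i then (1 : ZMod 2) else 0) = 0 := by
    rw [Finset.sum_congr rfl fun i _ => key i, Finset.sum_add_distrib, hre,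
      ← Finset.sum_add_distrib]
    have h2 : ∀ x : ZMod 2, x + x = 0 := by decide
    simp [h2]
  have hcard : (w.saddleCount : ZMod 2) = 0 := by
    rw [ClosedWalk.saddleCount, Nat.card_eq_fintype_card, Fintype.card_subtype, ← hsum,
      Finset.sum_boole]
  intro hodd
  obtain ⟨k, hk⟩ := hodd
  rw [hk] at hcard
  push_cast at hcard
  rw [show (2 : ZMod 2) = 0 by decide] at hcard
  simp at hcard

lemma two_single_all (hMS : G.IsMS) (hconn : G.Connected)
    (hodd : ∃ w : G.ClosedWalk, w.IsCycle ∧ Odd w.saddleCount) :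
    ∀ (e : G.E) (k : ℤ), Pi.single e (2 * k) ∈ G.D := by
  classical
  obtain ⟨w, hc, hoc⟩ := hodd
  have hm : 2 ≤ w.m := by
    by_contra hlt
    have hp := w.pos
    have h1 : w.m = 1 := by omega
    exact G.no_loop_cycle hMS w h1
  set e0 := w.edge 0 with he0
  have main : ∀ k : ℤ, Pi.single e0 (2 * k) ∈ G.D := by
    by_contra hB
    push_neg at hB
    obtain ⟨k0, hk0⟩ := hB
    set g : G.E → Bool := fun e => decide (∀ k : ℤ, Pi.single e0 k + Pi.single e k ∈ G.D)
      with hgdef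
    have hgtrue : ∀ e, g e = true ↔ (∀ k : ℤ, Pi.single e0 k + Pi.single e k ∈ G.D) := by
      intro e; simp [hgdef]
    have hgfalse : ∀ e, g e = false → (∀ k : ℤ, Pi.single e0 k - Pi.single e k ∈ G.D) := by
      intro e hf
      rcases G.rel_total hconn e0 e with h | h
      · exact absurd ((hgtrue e).2 h) (by simp [hf])
      · exact h
    have hpart : G.IsGroupPartition g := by
      constructor
      · intro e e' hseq heq
        apply hk0
        cases hbe : g e
        · have h1 := hgfalse e hbe
          have h2 := hgfalse e' (by rw [← heq]; exact hbe)
          have hmem := add_mem (add_mem (h1 k0) (h2 k0)) (G.seq_mem hseq k0)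
          convert hmem using 1
          simp only [two_mul, Pi.single_add]
          abel
        · have h1 := (hgtrue e).1 hbe
          have h2 := (hgtrue e').1 (by rw [← heq]; exact hbe)
          have hmem := sub_mem (add_mem (h1 k0) (h2 k0)) (G.seq_mem hseq k0)
          convert hmem using 1
          simp only [two_mul, Pi.single_add]
          abel
      · intro e e' hinc hns
        by_contra hne
        apply hk0
        have hi := G.inc_mem hinc hns k0
        rw [single_neg', ← sub_eq_add_neg] at hi
        cases hbe : g e
        · have hbe' : g e' = true := by
            cases hbe2 : g e'
            · exact absurd (hbe.trans hbe2.symm) hne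
            · rfl
          have h1 := hgfalse e hbe
          have h2 := (hgtrue e').1 hbe'
          have hmem := add_mem (add_mem (h1 k0) (h2 k0)) hi
          convert hmem using 1
          simp only [two_mul, Pi.single_add]
          abel
        · have hbe' : g e' = false := by
            cases hbe2 : g e'
            · rfl
            · exact absurd (hbe.trans hbe2.symm) hne
          have h1 := (hgtrue e).1 hbe
          have h2 := hgfalse e' hbe'
          have hmem := sub_mem (add_mem (h1 k0) (h2 k0)) hi
          convert hmem using 1
          simp only [two_mul, Pi.single_add]
          abel
    exact G.even_saddle_of_partition w hc hm g hpart hoc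
  intro e k
  rcases G.rel_total hconn e0 e with h | h
  · have hmem := sub_mem (add_mem (h k) (h k)) (main k)
    convert hmem using 1
    simp only [two_mul, Pi.single_add]
    abel
  · have hmem := sub_mem (main k) (add_mem (h k) (h k))
    convert hmem using 1
    simp only [two_mul, Pi.single_add]
    abel

lemma dvd_sum_mem (hMS : G.IsMS) (hconn : G.Connected)
    (hodd : ∃ w : G.ClosedWalk, w.IsCycle ∧ Odd w.saddleCount)
    {d : G.E → ℤ} (hd : (2 : ℤ) ∣ ∑ e, d e) : d ∈ G.D := by
  classical
  have htwo := G.two_single_all hMS hconn hodd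
  obtain ⟨w, -, -⟩ := hodd
  obtain ⟨e0⟩ : Nonempty G.E := ⟨w.edge 0⟩
  have hmix : ∀ (e : G.E) (k : ℤ), Pi.single e k - Pi.single e0 k ∈ G.D := by
    intro e k
    rcases G.rel_total hconn e e0 with h | h
    · have hmem := sub_mem (h k) (htwo e0 k)
      convert hmem using 1
      simp only [two_mul, Pi.single_add]
      abel
    · exact h k
  have hsingle : (Pi.single e0 (∑ e, d e) : G.E → ℤ) = ∑ e, Pi.single e0 (d e) := by
    funext x
    simp only [Finset.sum_apply, Pi.single_apply]
    by_cases hx : x = e0 <;> simp [hx]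
  have hu : (∑ e, Pi.single e (d e) : G.E → ℤ) = d := Finset.univ_sum_single d
  have hdecomp : d - Pi.single e0 (∑ e, d e)
      = ∑ e, (Pi.single e (d e) - Pi.single e0 (d e)) := by
    rw [Finset.sum_sub_distrib, hu, ← hsingle]
  have h1 : d - Pi.single e0 (∑ e, d e) ∈ G.D := by
    rw [hdecomp]
    exact sum_mem fun e _ => hmix e (d e)
  obtain ⟨k, hk⟩ := hd
  have h2 : Pi.single e0 (∑ e, d e) ∈ G.D := by rw [hk]; exact htwo e0 k
  have hmem := add_mem h1 h2
  rwa [sub_add_cancel] at hmem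

lemma sum_invariant {f : G.E → ℤ} {gg : G.E → WithTop ℤ}
    (h : G.FramingEquiv (G.ZF f) gg) :
    ∃ h1 : G.E → ℤ, gg = G.ZF h1 ∧ (∑ e, h1 e) ≡ (∑ e, f e) [ZMOD 2] := by
  classical
  induction h with
  | refl => exact ⟨f, rfl, Int.ModEq.refl _⟩
  | tail _ hstep ih =>
    obtain ⟨h1, rfl, hmod⟩ := ih
    rcases hstep with ⟨k, e, e', hseq, rfl⟩ | ⟨k, e, e', hinc, hns, rfl⟩
    · refine ⟨fun x => if x = e ∨ x = e' then h1 x + k else h1 x, ?_, ?_⟩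
      · funext x
        by_cases hx : x = e ∨ x = e' <;> simp [ZF, hx]
      · have hne := hseq.1
        have hptw : ∀ x, (if x = e ∨ x = e' then h1 x + k else h1 x)
            = h1 x + (if x ∈ ({e, e'} : Finset G.E) then k else 0) := by
          intro x
          by_cases hx : x = e ∨ x = e' <;> simp [hx]
        rw [Finset.sum_congr rfl fun x _ => hptw x, Finset.sum_add_distrib,
          Finset.sum_ite_mem, Finset.univ_inter, Finset.sum_pair hne]
        refine Int.ModEq.trans ?_ hmod
        exact Int.modEq_iff_dvd.2 ⟨-k, by ring⟩
    · refine ⟨fun x => if x = e then h1 x + k else if x = e' then h1 x + (-k) else h1 x, ?_, ?_⟩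
      · funext x
        by_cases hx : x = e
        · simp [ZF, hx]
        · by_cases hx' : x = e'
          · subst hx'; simp [ZF, hx]
          · simp [ZF, hx, hx']
      · have hne := hinc.1
        have hptw : ∀ x, (if x = e then h1 x + k else if x = e' then h1 x + (-k) else h1 x)
            = h1 x + ((if x = e then k else 0) + (if x = e' then -k else 0)) := by
          intro x
          by_cases hx : x = e
          · subst hx; simp [hne]
          · by_cases hx' : x = e'
            · subst hx'; simp [hx]
            · simp [hx, hx']
        rw [Finset.sum_congr rfl fun x _ => hptw x, Finset.sum_add_distrib,
          Finset.sum_add_distrib, Finset.sum_ite_eq', Finset.sum_ite_eq']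
        simpa using hmod


end MSGraph

end Aux

/-- Two integer framings of a connected MS-graph containing a cycle with an odd number of
saddles are equivalent iff the sums of their framings are congruent modulo 2. -/
theorem framingEquiv_iff_sum_mod_two_of_odd_cycle (G : MSGraph) (hMS : G.IsMS)
    (hconn : G.Connected)
    (hodd : ∃ w : G.ClosedWalk, w.IsCycle ∧ Odd w.saddleCount)
    (f f' : G.E → ℤ) :
    G.FramingEquiv (fun e => (f e : WithTop ℤ)) (fun e => (f' e : WithTop ℤ)) ↔
      (∑ e : G.E, f e) ≡ (∑ e : G.E, f' e) [ZMOD 2] := by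
  constructor
  · intro h
    obtain ⟨h1, hEq, hmod⟩ := G.sum_invariant (f := f) h
    have hf' : f' = h1 := by
      funext x
      have hx := congrFun hEq x
      simp only [MSGraph.ZF] at hx
      exact_mod_cast hx
    rw [hf']
    exact hmod.symm
  · intro hmod
    have hdvd : (2 : ℤ) ∣ ∑ e, (f' - f) e := by
      have h1 := Int.ModEq.dvd hmod
      have h2 : ∑ e, (f' - f) e = (∑ e : G.E, f' e) - ∑ e : G.E, f e := by
        simp [Finset.sum_sub_distrib]
      rwa [h2]
    have hm : (f' - f) ∈ G.D := G.dvd_sum_mem hMS hconn hodd hdvd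
    have hm' : G.FramingEquiv (G.ZF 0) (G.ZF (f' - f)) := hm
    have hsh := MSGraph.FZ_shift f hm'
    rw [zero_add, sub_add_cancel] at hsh
    exact hsh
end

section
/- A connected MS-graph contains a closed walk (a closed edge-path in the underlying undirected graph, possibly with repeated vertices and edges) having an odd number of saddle passages if and only if it contains a cycle (a closed edge-path with no repeated edges and no repeated vertices) with an odd number of saddles. -/
namespace MSGraph

variable {G : MSGraph}

/-- In an MS-graph there are no loops. -/
lemma loopless (hMS : G.IsMS) (e : G.E) : G.src e ≠ G.tgt e := by
  intro h
  rcases hMS e with (hs | hs) | (hs | hs)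
  · exact hs e h.symm
  · exact hs e rfl
  · exact hs e rfl
  · exact hs e h

/-- Consecutive vertices of a closed walk are distinct. -/
lemma ClosedWalk.consec_ne (hMS : G.IsMS) (w : G.ClosedWalk) (i : ZMod w.m) :
    w.vert i ≠ w.vert (i + 1) := by
  intro h
  rcases w.joins i with ⟨h1, h2⟩ | ⟨h1, h2⟩
  · exact loopless hMS (w.edge i) (by rw [h1, h2, h])
  · exact loopless hMS (w.edge i) (by rw [h1, h2, h])

/-- Characterization of a saddle passage in terms of the direction predicates. -/
lemma saddle_iff (hMS : G.IsMS) (w : G.ClosedWalk) (i : ZMod w.m) :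
    w.SaddleAt i ↔
      ((G.tgt (w.edge i) = w.vert (i + 1)) ↔
        (G.tgt (w.edge (i + 1)) = w.vert (i + 1 + 1))) := by
  have hne0 := w.consec_ne hMS i
  have hne1 := w.consec_ne hMS (i + 1)
  have hj0 := w.joins i
  have hj1 := w.joins (i + 1)
  unfold MSGraph.EdgeJoins at hj0 hj1
  unfold MSGraph.ClosedWalk.SaddleAt
  rcases hj0 with ⟨h1, h2⟩ | ⟨h1, h2⟩ <;> rcases hj1 with ⟨h3, h4⟩ | ⟨h3, h4⟩ <;>
    constructor <;> intro hyp <;> simp_all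

lemma saddle_parity (hMS : G.IsMS) (w : G.ClosedWalk) :
    (w.saddleCount : ZMod 2) = (w.m : ZMod 2) := by
  classical
  haveI : NeZero w.m := ⟨w.pos.ne'⟩
  set χ : ZMod w.m → ZMod 2 :=
    fun i => if G.tgt (w.edge i) = w.vert (i + 1) then 1 else 0 with hχ
  have key : ∀ i, (if w.SaddleAt i then (1 : ZMod 2) else 0) = 1 + χ i + χ (i + 1) := by
    intro i
    have hs := saddle_iff hMS w i
    by_cases h1 : G.tgt (w.edge i) = w.vert (i + 1) <;>
      by_cases h2 : G.tgt (w.edge (i + 1)) = w.vert (i + 1 + 1) <;>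
      simp [hχ, h1, h2, hs] <;> decide
  have hcount : w.saddleCount = ∑ i : ZMod w.m, (if w.SaddleAt i then 1 else 0) := by
    rw [MSGraph.ClosedWalk.saddleCount, Nat.card_eq_fintype_card, Fintype.card_subtype,
      Finset.card_filter]
  rw [hcount]
  push_cast
  rw [Finset.sum_congr rfl (fun i _ => key i)]
  have hsum2 : ∑ i : ZMod w.m, χ (i + 1) = ∑ i : ZMod w.m, χ i :=
    Equiv.sum_comp (Equiv.addRight (1 : ZMod w.m)) χ
  rw [Finset.sum_add_distrib, Finset.sum_add_distrib, hsum2, Finset.sum_const,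
    Finset.card_univ, ZMod.card]
  rw [add_assoc, CharTwo.add_self_eq_zero, add_zero, nsmul_eq_mul, mul_one]

lemma odd_saddle_iff_odd_m (hMS : G.IsMS) (w : G.ClosedWalk) :
    Odd w.saddleCount ↔ Odd w.m := by
  have h := (ZMod.natCast_eq_natCast_iff _ _ _).1 (saddle_parity hMS w)
  unfold Nat.ModEq at h
  rw [Nat.odd_iff, Nat.odd_iff]
  omega

/-- Sub-closed-walk of a closed walk: start at index `a`, length `L`. -/
def ClosedWalk.subWalk (w : G.ClosedWalk) (a L : ℕ) (hL : 0 < L)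
    (hv : w.vert ((a : ZMod w.m) + (L : ℕ)) = w.vert (a : ZMod w.m)) : G.ClosedWalk where
  m := L
  pos := hL
  vert t := w.vert ((a : ZMod w.m) + (t.val : ℕ))
  edge t := w.edge ((a : ZMod w.m) + (t.val : ℕ))
  joins t := by
    haveI : NeZero L := ⟨hL.ne'⟩
    have hval : (t + 1).val = (t.val + 1) % L := by
      conv_lhs => rw [← ZMod.natCast_rightInverse t]
      rw [← Nat.cast_add_one, ZMod.val_natCast]
    show G.EdgeJoins (w.edge ((a : ZMod w.m) + (t.val : ℕ)))
      (w.vert ((a : ZMod w.m) + (t.val : ℕ)))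
      (w.vert ((a : ZMod w.m) + (((t + 1).val : ℕ) : ZMod w.m)))
    rcases eq_or_lt_of_le (Nat.succ_le_of_lt t.val_lt) with heq | hlt
    · have heq' : t.val + 1 = L := heq
      have h0 : (t + 1).val = 0 := by rw [hval, heq', Nat.mod_self]
      have hj := w.joins ((a : ZMod w.m) + (t.val : ℕ))
      rw [h0]
      have harr : ((a : ZMod w.m) + (t.val : ℕ)) + 1 = (a : ZMod w.m) + (L : ℕ) := by
        have hcast : ((t.val + 1 : ℕ) : ZMod w.m) = ((L : ℕ) : ZMod w.m) := by rw [heq']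
        rw [← hcast]; push_cast; ring
      rw [harr, hv] at hj
      simpa using hj
    · have hlt' : t.val + 1 < L := hlt
      have h1 : (t + 1).val = t.val + 1 := by rw [hval, Nat.mod_eq_of_lt hlt']
      have := w.joins ((a : ZMod w.m) + (t.val : ℕ))
      rw [h1]
      have harr : ((a : ZMod w.m) + ((t.val + 1 : ℕ) : ZMod w.m))
          = ((a : ZMod w.m) + (t.val : ℕ)) + 1 := by push_cast; ring
      rw [harr]
      exact this

/-- From a repeated vertex on an odd closed walk, produce a strictly shorter odd closed walk. -/
lemma exists_shorter (w₀ : G.ClosedWalk) (a b : ℕ) (hab : a < b) (hbm : b < w₀.m)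
    (hvv : w₀.vert (a : ZMod w₀.m) = w₀.vert (b : ZMod w₀.m)) (hodd : Odd w₀.m) :
    ∃ w' : G.ClosedWalk, Odd w'.m ∧ w'.m < w₀.m := by
  have hba : b - a ≤ w₀.m := le_of_lt (lt_of_le_of_lt (Nat.sub_le b a) hbm)
  have hpos1 : 0 < b - a := Nat.sub_pos_of_lt hab
  have hpos2 : 0 < w₀.m - (b - a) :=
    Nat.sub_pos_of_lt (lt_of_le_of_lt (Nat.sub_le b a) hbm)
  have hv1 : w₀.vert ((a : ZMod w₀.m) + ((b - a : ℕ) : ZMod w₀.m))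
      = w₀.vert (a : ZMod w₀.m) := by
    rw [Nat.cast_sub hab.le]
    have h : (a : ZMod w₀.m) + ((b : ZMod w₀.m) - (a : ZMod w₀.m)) = (b : ZMod w₀.m) := by
      ring
    rw [h, ← hvv]
  have hv2 : w₀.vert ((b : ZMod w₀.m) + ((w₀.m - (b - a) : ℕ) : ZMod w₀.m))
      = w₀.vert (b : ZMod w₀.m) := by
    have h : ((b : ZMod w₀.m) + ((w₀.m - (b - a) : ℕ) : ZMod w₀.m)) = (a : ZMod w₀.m) := by
      rw [Nat.cast_sub hba, Nat.cast_sub hab.le, ZMod.natCast_self]; ring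
    rw [h, hvv]
  have hor : Odd (b - a) ∨ Odd (w₀.m - (b - a)) := by
    rcases Nat.even_or_odd (b - a) with h | h
    · right
      rw [Nat.odd_iff] at hodd ⊢
      rw [Nat.even_iff] at h
      omega
    · left; exact h
  rcases hor with h | h
  · exact ⟨w₀.subWalk a (b - a) hpos1 hv1, h, lt_of_le_of_lt (Nat.sub_le b a) hbm⟩
  · exact ⟨w₀.subWalk b (w₀.m - (b - a)) hpos2 hv2, h, Nat.sub_lt w₀.pos hpos1⟩

@[simp] lemma ClosedWalk.subWalk_m (w : G.ClosedWalk) (a L : ℕ) (hL : 0 < L) (hv) :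
    (w.subWalk a L hL hv).m = L := rfl

end MSGraph

/-- A connected MS-graph contains a closed walk with an odd number of saddle passages iff
it contains a cycle with an odd number of saddles. -/
theorem exists_odd_closed_walk_iff_exists_odd_cycle (G : MSGraph) (hMS : G.IsMS)
    (hconn : G.Connected) :
    (∃ w : G.ClosedWalk, Odd w.saddleCount) ↔
      (∃ w : G.ClosedWalk, w.IsCycle ∧ Odd w.saddleCount) := by
  classical
  constructor
  · rintro ⟨w, hw⟩
    have hP : ∃ n, Odd n ∧ ∃ w' : G.ClosedWalk, w'.m = n :=
      ⟨w.m, (MSGraph.odd_saddle_iff_odd_m hMS w).1 hw, w, rfl⟩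
    obtain ⟨hnodd, w₀, hm₀⟩ := Nat.find_spec hP
    have hmin := fun m hm => Nat.find_min hP (m := m) hm
    haveI : NeZero w₀.m := ⟨w₀.pos.ne'⟩
    have hodd₀ : Odd w₀.m := hm₀ ▸ hnodd
    -- vertex injectivity
    have hvinj : Function.Injective w₀.vert := by
      intro i j hv
      by_contra hne
      have hvals : i.val ≠ j.val := fun h => hne (ZMod.val_injective _ h)
      have hcontra : ∃ w' : G.ClosedWalk, Odd w'.m ∧ w'.m < w₀.m := by
        rcases lt_or_gt_of_ne hvals with hlt | hlt
        · refine MSGraph.exists_shorter w₀ i.val j.val hlt j.val_lt ?_ hodd₀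
          rw [ZMod.natCast_rightInverse i, ZMod.natCast_rightInverse j]; exact hv
        · refine MSGraph.exists_shorter w₀ j.val i.val hlt i.val_lt ?_ hodd₀
          rw [ZMod.natCast_rightInverse i, ZMod.natCast_rightInverse j]; exact hv.symm
      obtain ⟨w', hodd', hlt'⟩ := hcontra
      exact hmin w'.m (hm₀ ▸ hlt') ⟨hodd', w', rfl⟩
    -- a helper for the degenerate 2-cycle case
    have key2 : ∀ i j : ZMod w₀.m, i ≠ j → i = j + 1 → i + 1 = j → False := by
      intro i j hne e1 e2
      have h5 : j + 2 = j + 0 := by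
        rw [add_zero]
        calc j + 2 = (j + 1) + 1 := by ring
          _ = i + 1 := by rw [e1]
          _ = j := e2
      have h20 : (2 : ZMod w₀.m) = 0 := add_left_cancel h5
      have hdvd : w₀.m ∣ 2 := by
        have : ((2 : ℕ) : ZMod w₀.m) = 0 := by push_cast; exact h20
        exact (ZMod.natCast_eq_zero_iff 2 w₀.m).1 this
      rcases (Nat.dvd_prime Nat.prime_two).1 hdvd with h1 | h2
      · have hi := ZMod.val_lt i
        have hj := ZMod.val_lt j
        exact hne (ZMod.val_injective _ (by omega))
      · rw [h2, Nat.odd_iff] at hodd₀; omega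
    -- edge injectivity
    have heinj : Function.Injective w₀.edge := by
      intro i j hij
      by_contra hne
      have hji := w₀.joins i
      have hjj := w₀.joins j
      rw [hij] at hji
      unfold MSGraph.EdgeJoins at hji hjj
      rcases hji with ⟨h1, h2⟩ | ⟨h1, h2⟩ <;> rcases hjj with ⟨h3, h4⟩ | ⟨h3, h4⟩
      · exact hne (hvinj (h1.symm.trans h3))
      · exact key2 i j hne (hvinj (h1.symm.trans h3)) (hvinj (h2.symm.trans h4))
      · exact key2 j i (Ne.symm hne) (hvinj (h3.symm.trans h1)) (hvinj (h4.symm.trans h2))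
      · exact hne (hvinj (h2.symm.trans h4))
    exact ⟨w₀, ⟨heinj, hvinj⟩, (MSGraph.odd_saddle_iff_odd_m hMS w₀).2 hodd₀⟩
  · rintro ⟨w, _, hw⟩
    exact ⟨w, hw⟩
end

section
/- Let G be an MS-graph and let e be an edge that lies on a cycle of G with an odd number of saddles. Then every integer framing f of G is equivalent to the framing f' with f'(e) = f(e) + 2 and f'(e') = f(e') for all edges e' ≠ e. -/
open MSGraph Finset in
private lemma step_of (G : MSGraph) (g : G.E → ℤ) (a b : G.E) (k k' : ℤ)
    (hne : a ≠ b)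
    (h : (G.Sequential a b ∧ k' = k) ∨
         (G.Incident a b ∧ ¬ G.Sequential a b ∧ k' = -k)) :
    G.Step (fun x => ((g x : WithTop ℤ)))
      (fun x => (((g x + (if x = a then k else 0) + (if x = b then k' else 0)) : ℤ) : WithTop ℤ)) := by
  classical
  rcases h with ⟨hseq, rfl⟩ | ⟨hinc, hns, rfl⟩
  · left
    refine ⟨k', a, b, hseq, funext fun x => ?_⟩
    by_cases h1 : x = a <;> by_cases h2 : x = b <;> simp_all
  · right
    refine ⟨k, a, b, hinc, hns, funext fun x => ?_⟩
    by_cases h1 : x = a <;> by_cases h2 : x = b <;> simp_all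

open MSGraph Finset in
private theorem aux_main (G : MSGraph) (hMS : G.IsMS) (m : ℕ) (pos : 0 < m)
    (vert : ZMod m → G.V) (edge : ZMod m → G.E)
    (joins : ∀ i, G.EdgeJoins (edge i) (vert i) (vert (i + 1)))
    (hinjE : Function.Injective edge) (hinjV : Function.Injective vert)
    (P : ZMod m → Prop)
    (hP : ∀ i, P i ↔ ((G.tgt (edge i) = vert (i + 1) ∧ G.src (edge (i + 1)) = vert (i + 1)) ∨
      (G.src (edge i) = vert (i + 1) ∧ G.tgt (edge (i + 1)) = vert (i + 1))))
    (hodd : Odd (Nat.card {i : ZMod m // P i}))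
    (e : G.E) (h0 : edge 0 = e) (f : G.E → ℤ) :
    G.FramingEquiv (fun x => (f x : WithTop ℤ))
      (fun x => (((if x = e then f x + 2 else f x) : ℤ) : WithTop ℤ)) := by
  classical
  haveI : NeZero m := ⟨pos.ne'⟩
  -- m ≠ 1 : otherwise a loop, contradicting the MS property
  by_cases hm1 : m = 1
  · exfalso
    subst hm1
    have h01 : (0 + 1 : ZMod 1) = 0 := by decide
    have hj := joins 0
    rw [h01] at hj
    obtain ⟨hs, ht⟩ : G.src (edge 0) = vert 0 ∧ G.tgt (edge 0) = vert 0 := by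
      rcases hj with ⟨h1, h2⟩ | ⟨h1, h2⟩ <;> exact ⟨h1, h2⟩
    rcases hMS (edge 0) with (h | h) | (h | h)
    · exact h (edge 0) (ht.trans hs.symm)
    · exact h (edge 0) rfl
    · exact h (edge 0) rfl
    · exact h (edge 0) (hs.trans ht.symm)
  -- m ≠ 2 : otherwise the saddle count is even
  by_cases hm2 : m = 2
  · exfalso
    subst hm2
    have e10 : (0 + 1 : ZMod 2) = 1 := by decide
    have e11 : (1 + 1 : ZMod 2) = 0 := by decide
    have hj0 := joins 0; have hj1 := joins 1
    rw [e10] at hj0; rw [e11] at hj1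
    have hvne : vert 0 ≠ vert 1 := fun h => (by decide : (0 : ZMod 2) ≠ 1) (hinjV h)
    have hiff : P 0 ↔ P 1 := by
      rw [hP 0, hP 1, e10, e11]
      rcases hj0 with ⟨a0, b0⟩ | ⟨a0, b0⟩ <;> rcases hj1 with ⟨a1, b1⟩ | ⟨a1, b1⟩ <;>
        constructor <;> rintro (⟨x, y⟩ | ⟨x, y⟩) <;> simp_all
    have hcases : ∀ i : ZMod 2, i = 0 ∨ i = 1 := by decide
    by_cases hP0 : P 0
    · have hall : ∀ i : ZMod 2, P i := by
        intro i; rcases hcases i with h | h <;> subst h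
        · exact hP0
        · exact hiff.mp hP0
      have hcard : Nat.card {i : ZMod 2 // P i} = 2 := by
        rw [Nat.card_congr (Equiv.subtypeUnivEquiv hall)]
        simp [Nat.card_eq_fintype_card]
      rw [hcard, Nat.odd_iff] at hodd
      norm_num at hodd
    · have hnone : ∀ i : ZMod 2, ¬ P i := by
        intro i; rcases hcases i with h | h <;> subst h
        · exact hP0
        · exact fun hp => hP0 (hiff.mpr hp)
      haveI : IsEmpty {i : ZMod 2 // P i} := ⟨fun x => hnone x.1 x.2⟩
      rw [Nat.card_of_isEmpty, Nat.odd_iff] at hodd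
      norm_num at hodd
  -- now m ≥ 3
  have hm3 : 3 ≤ m := by
    rcases Nat.lt_or_ge m 3 with h | h
    · interval_cases m <;> simp_all
    · exact h
  have hndvd : ∀ a : ℕ, 0 < a → a < 3 → ((a : ZMod m) ≠ 0) := by
    intro a ha1 ha2 h
    rw [ZMod.natCast_eq_zero_iff] at h
    have := Nat.le_of_dvd ha1 h
    omega
  have h1ne0 : (1 : ZMod m) ≠ 0 := by
    have := hndvd 1 (by norm_num) (by norm_num)
    simpa using this
  have h2ne0 : (2 : ZMod m) ≠ 0 := by
    have := hndvd 2 (by norm_num) (by norm_num)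
    simpa using this
  have hvne1 : ∀ i : ZMod m, vert i ≠ vert (i + 1) := by
    intro i h
    exact h1ne0 (left_eq_add.mp (hinjV h))
  have hvne2 : ∀ i : ZMod m, vert i ≠ vert (i + 1 + 1) := by
    intro i h
    have := hinjV h
    rw [add_assoc] at this
    have h2 := left_eq_add.mp this
    rw [one_add_one_eq_two] at h2
    exact h2ne0 h2
  have hene : ∀ i : ZMod m, edge i ≠ edge (i + 1) := by
    intro i h
    exact h1ne0 (left_eq_add.mp (hinjE h))
  -- sequential / incident dichotomy at each corner
  have hseq : ∀ j : ZMod m, P j → G.Sequential (edge j) (edge (j + 1)) := by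
    intro j hp
    rcases (hP j).mp hp with ⟨h1, h2⟩ | ⟨h1, h2⟩
    · exact ⟨hene j, Or.inl (h1.trans h2.symm)⟩
    · exact ⟨hene j, Or.inr (h2.trans h1.symm)⟩
  have hinc : ∀ j : ZMod m, ¬ P j →
      G.Incident (edge j) (edge (j + 1)) ∧ ¬ G.Sequential (edge j) (edge (j + 1)) := by
    intro j hnp
    have hj := joins j
    have hj' := joins (j + 1)
    constructor
    · refine ⟨hene j, ?_⟩
      rcases hj with ⟨hs, ht⟩ | ⟨hs, ht⟩ <;> rcases hj' with ⟨hs', ht'⟩ | ⟨hs', ht'⟩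
      · exact Or.inr (Or.inr (Or.inl (ht.trans hs'.symm)))
      · exact Or.inr (Or.inr (Or.inr (ht.trans ht'.symm)))
      · exact Or.inl (hs.trans hs'.symm)
      · exact Or.inr (Or.inl (hs.trans ht'.symm))
    · rintro ⟨-, hcase | hcase⟩
      · rcases hj with ⟨hs, ht⟩ | ⟨hs, ht⟩ <;> rcases hj' with ⟨hs', ht'⟩ | ⟨hs', ht'⟩
        · exact hnp ((hP j).mpr (Or.inl ⟨ht, hs'⟩))
        · exact hvne1 (j + 1) (ht.symm.trans (hcase.trans hs'))
        · exact hvne1 j (ht.symm.trans (hcase.trans hs'))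
        · exact hvne2 j (ht.symm.trans (hcase.trans hs'))
      · rcases hj with ⟨hs, ht⟩ | ⟨hs, ht⟩ <;> rcases hj' with ⟨hs', ht'⟩ | ⟨hs', ht'⟩
        · exact hvne2 j (hs.symm.trans (hcase.symm.trans ht'))
        · exact hvne1 j (hs.symm.trans (hcase.symm.trans ht'))
        · exact hvne1 (j + 1) (hs.symm.trans (hcase.symm.trans ht'))
        · exact hnp ((hP j).mpr (Or.inr ⟨hs, ht'⟩))
  -- the coefficient sequence
  set σ : ℕ → ℤ := fun j => if P ((j : ZMod m)) then 1 else -1 with hσdef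
  set t : ℕ → ℤ := fun j => (-1 : ℤ) ^ j * ∏ k ∈ Finset.range j, σ k with htdef
  have htsucc : ∀ n : ℕ, t (n + 1) = -(σ n * t n) := by
    intro n
    simp only [htdef, Finset.prod_range_succ, pow_succ]
    ring
  set g : ℕ → G.E → ℤ := fun n x => f x + ∑ j ∈ Finset.range n,
      ((if x = edge ((j : ZMod m)) then t j else 0) +
       (if x = edge ((j : ZMod m) + 1) then σ j * t j else 0)) with hgdef
  -- the chain of elementary operations
  have hchain : ∀ n : ℕ, Relation.ReflTransGen G.Step
      (fun x => ((f x : WithTop ℤ))) (fun x => ((g n x : WithTop ℤ))) := by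
    intro n
    induction n with
    | zero =>
      have hz : (fun x => ((g 0 x : WithTop ℤ))) = fun x => ((f x : WithTop ℤ)) := by
        funext x; simp [hgdef]
      rw [hz]
    | succ n ih =>
      refine ih.tail ?_
      have hstep : (fun x => ((g (n + 1) x : WithTop ℤ))) =
          (fun x => (((g n x + (if x = edge ((n : ZMod m)) then t n else 0) +
            (if x = edge ((n : ZMod m) + 1) then σ n * t n else 0)) : ℤ) : WithTop ℤ)) := by
        funext x
        congr 1
        simp only [hgdef, Finset.sum_range_succ]
        ring
      rw [hstep]
      apply step_of G (g n) _ _ _ _ (hene _)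
      by_cases hp : P ((n : ZMod m))
      · exact Or.inl ⟨hseq _ hp, by simp [hσdef, hp]⟩
      · exact Or.inr ⟨(hinc _ hp).1, (hinc _ hp).2, by simp [hσdef, hp]⟩
  -- evaluation of the final framing
  have hgm : ∀ x, g m x = if x = e then f x + 2 else f x := by
    intro x
    by_cases hx : ∃ i : ZMod m, edge i = x
    · obtain ⟨i, rfl⟩ := hx
      have hvlt : i.val < m := ZMod.val_lt i
      have hA : (∑ j ∈ Finset.range m, (if edge i = edge ((j : ZMod m)) then t j else 0))
          = t i.val := by
        rw [Finset.sum_eq_single_of_mem i.val (Finset.mem_range.mpr hvlt)]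
        · rw [if_pos (by rw [ZMod.natCast_zmod_val])]
        · intro j hj hji
          rw [if_neg]
          intro hcond
          have h1 : i = ((j : ZMod m)) := hinjE hcond
          have h2 : ((j : ZMod m)).val = j := ZMod.val_cast_of_lt (Finset.mem_range.mp hj)
          exact hji (by rw [← h2, ← h1])
      have hB : (∑ j ∈ Finset.range m, (if edge i = edge ((j : ZMod m) + 1) then σ j * t j else 0))
          = σ (i - 1).val * t (i - 1).val := by
        rw [Finset.sum_eq_single_of_mem (i - 1).val (Finset.mem_range.mpr (ZMod.val_lt _))]
        · rw [if_pos]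
          rw [ZMod.natCast_zmod_val]
          congr 1
          ring
        · intro j hj hji
          rw [if_neg]
          intro hcond
          have h1 : i = ((j : ZMod m)) + 1 := hinjE hcond
          have h2 : ((j : ZMod m)).val = j := ZMod.val_cast_of_lt (Finset.mem_range.mp hj)
          have h3 : ((j : ZMod m)) = i - 1 := by rw [h1]; ring
          exact hji (by rw [← h2, h3])
      have hsum : g m (edge i) = f (edge i) + (t i.val + σ (i - 1).val * t (i - 1).val) := by
        simp only [hgdef]
        rw [Finset.sum_add_distrib, hA, hB]
      by_cases hi : i = 0
      · subst hi
        rw [if_pos h0, hsum, ZMod.val_zero]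
        set j₀ := ((0 : ZMod m) - 1).val with hj₀
        have hj₀cast : ((j₀ : ℕ) : ZMod m) = (0 : ZMod m) - 1 := ZMod.natCast_zmod_val _
        have hj₀lt : j₀ < m := ZMod.val_lt _
        have hj₀succ : j₀ + 1 = m := by
          by_contra hne
          have hlt : j₀ + 1 < m := by omega
          have hz : ((j₀ + 1 : ℕ) : ZMod m) = 0 := by
            push_cast
            rw [hj₀cast]
            ring
          rw [ZMod.natCast_eq_zero_iff] at hz
          have := Nat.le_of_dvd (by omega) hz
          omega
        have hprodsplit : σ j₀ * t j₀ = (-1 : ℤ) ^ j₀ * ∏ k ∈ Finset.range m, σ k := by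
          rw [← hj₀succ]
          simp only [htdef, Finset.prod_range_succ]
          ring
        have hprodP : (∏ k ∈ Finset.range m, σ k) =
            ∏ i : ZMod m, (if P i then (1 : ℤ) else -1) := by
          refine Finset.prod_nbij' (fun j => ((j : ZMod m))) (fun i => i.val)
            ?_ ?_ ?_ ?_ ?_
          · intro a _; exact Finset.mem_univ _
          · intro a _; exact Finset.mem_range.mpr (ZMod.val_lt a)
          · intro a ha; exact ZMod.val_cast_of_lt (Finset.mem_range.mp ha)
          · intro a _; exact ZMod.natCast_zmod_val a
          · intro a _; simp [hσdef]
        have hcardsplit : (∏ i : ZMod m, (if P i then (1 : ℤ) else -1)) =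
            (-1 : ℤ) ^ (Finset.univ.filter (fun i : ZMod m => ¬ P i)).card := by
          rw [Finset.prod_ite]
          simp [Finset.prod_const]
        have hscard : Nat.card {i : ZMod m // P i} =
            (Finset.univ.filter (fun i : ZMod m => P i)).card := by
          rw [Nat.card_eq_fintype_card, Fintype.card_subtype]
        have hab : (Finset.univ.filter (fun i : ZMod m => P i)).card +
            (Finset.univ.filter (fun i : ZMod m => ¬ P i)).card = m := by
          rw [Finset.card_filter_add_card_filter_not]
          simp [ZMod.card]
        obtain ⟨r, hr⟩ := hodd
        rw [hscard] at hr
        have heven : Even (j₀ + (Finset.univ.filter (fun i : ZMod m => ¬ P i)).card) := by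
          refine ⟨r + (Finset.univ.filter (fun i : ZMod m => ¬ P i)).card, by omega⟩
        have ht0 : t 0 = 1 := by simp [htdef]
        have hkey : t 0 + σ j₀ * t j₀ = 2 := by
          rw [ht0, hprodsplit, hprodP, hcardsplit, ← pow_add, Even.neg_one_pow heven]
          norm_num
        rw [hkey]
      · have hie : edge i ≠ e := by
          intro h
          exact hi (hinjE (h.trans h0.symm))
        rw [if_neg hie, hsum]
        set n₀ := (i - 1).val with hn₀
        have hcast' : ((n₀ : ℕ) : ZMod m) = i - 1 := ZMod.natCast_zmod_val _
        have hn₀lt : n₀ < m := ZMod.val_lt _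
        have hival : i.val = n₀ + 1 := by
          have hne : n₀ + 1 ≠ m := by
            intro h
            have hz : ((n₀ + 1 : ℕ) : ZMod m) = 0 := by
              rw [h]; exact ZMod.natCast_self m
            rw [Nat.cast_add, Nat.cast_one, hcast'] at hz
            apply hi
            have : i - 1 + 1 = i := by ring
            rw [this] at hz
            exact hz
          have hlt : n₀ + 1 < m := by omega
          have hcast2 : ((n₀ + 1 : ℕ) : ZMod m) = i := by
            rw [Nat.cast_add, Nat.cast_one, hcast']
            ring
          rw [← hcast2, ZMod.val_cast_of_lt hlt]
        rw [hival, htsucc]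
        ring
    · push_neg at hx
      have hxe : x ≠ e := by
        intro h; exact hx 0 (h0.trans h.symm)
      rw [if_neg hxe]
      simp only [hgdef]
      rw [Finset.sum_eq_zero, add_zero]
      intro j _
      rw [if_neg (fun h => hx _ h.symm), if_neg (fun h => hx _ h.symm)]
      ring
  have hfinal : (fun x => ((g m x : WithTop ℤ))) =
      (fun x => (((if x = e then f x + 2 else f x) : ℤ) : WithTop ℤ)) := by
    funext x; rw [hgm x]
  have hres := hchain m
  rw [hfinal] at hres
  exact hres

/-- If an edge `e` of an MS-graph lies on a cycle with an odd number of saddles, then any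
integer framing is equivalent to the framing obtained by adding `2` to the framing of `e`,
the framings of all other edges being unchanged. -/
theorem framing_add_two_equiv_of_odd_cycle (G : MSGraph) (hMS : G.IsMS) (e : G.E)
    (hcyc : ∃ w : G.ClosedWalk, w.IsCycle ∧ Odd w.saddleCount ∧ ∃ i, w.edge i = e)
    (f : G.E → ℤ) :
    G.FramingEquiv (fun x => (f x : WithTop ℤ))
      (fun x => (((if x = e then f x + 2 else f x) : ℤ) : WithTop ℤ)) := by
  obtain ⟨w, hc, hodd, i₀, hi₀⟩ := hcyc
  haveI : NeZero w.m := ⟨w.pos.ne'⟩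
  apply aux_main G hMS w.m w.pos (fun j => w.vert (j + i₀)) (fun j => w.edge (j + i₀))
    (fun i => by
      have hj := w.joins (i + i₀)
      have hrw : i + i₀ + 1 = i + 1 + i₀ := by ring
      rw [hrw] at hj
      exact hj)
    (fun a b h => by
      have := hc.1 h
      exact add_right_cancel this)
    (fun a b h => by
      have := hc.2 h
      exact add_right_cancel this)
    (fun i => w.SaddleAt (i + i₀))
    (fun i => by
      have hrw : i + 1 + i₀ = i + i₀ + 1 := by ring
      simp only [hrw]
      exact Iff.rfl)
    (by
      have hcard : Nat.card {i : ZMod w.m // w.SaddleAt (i + i₀)} = w.saddleCount :=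
        Nat.card_congr ((Equiv.addRight i₀).subtypeEquiv fun i => Iff.rfl)
      rw [hcard]
      exact hodd)
    e
    (by show w.edge (0 + i₀) = e; rw [zero_add]; exact hi₀)
    f
end

section
/- Let G be a connected MS-graph that has at least one saddle and contains no cycle with an odd number of saddles. Then the edge set of G admits a partition into two groups such that any two sequential edges belong to distinct groups and any two incident edges that are not sequential belong to the same group. -/
section Aux

open MSGraph

private lemma aux_joins_symm (G : MSGraph) {e : G.E} {v w : G.V}
    (h : G.EdgeJoins e v w) : G.EdgeJoins e w v := h.symm

private lemma aux_noLoop (G : MSGraph) (hMS : G.IsMS) (e : G.E) : G.src e ≠ G.tgt e := by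
  intro h
  rcases hMS e with (hs | hs) | (hs | hs)
  · exact hs e h.symm
  · exact hs e rfl
  · exact hs e rfl
  · exact hs e h

/-- A closed walk of length `m` given by a function `ℕ → V × E`. -/
private def auxCWF (G : MSGraph) (m : ℕ) (f : ℕ → G.V × G.E) : Prop :=
  ∀ i, i < m → G.EdgeJoins (f i).2 (f i).1 (f ((i + 1) % m)).1

private lemma aux_cut (G : MSGraph) {m : ℕ} {f : ℕ → G.V × G.E} (hf : auxCWF G m f)
    {i j : ℕ} (hij : i < j) (hj : j < m) (hv : (f i).1 = (f j).1) :
    auxCWF G (j - i) (fun k => f (i + k)) ∧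
    auxCWF G (m - (j - i)) (fun k => if k < i then f k else f (k + (j - i))) := by
  constructor
  · intro k hk
    by_cases hk1 : k + 1 < j - i
    · have h1 : (k + 1) % (j - i) = k + 1 := Nat.mod_eq_of_lt hk1
      have h2 := hf (i + k) (by omega)
      rw [Nat.mod_eq_of_lt (by omega : i + k + 1 < m)] at h2
      simp only [h1]
      have h3 : i + (k + 1) = i + k + 1 := by omega
      rw [h3]
      exact h2
    · have hkj : k + 1 = j - i := by omega
      have h1 : (k + 1) % (j - i) = 0 := by rw [hkj, Nat.mod_self]
      have h2 := hf (i + k) (by omega)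
      have h3 : i + k + 1 = j := by omega
      rw [Nat.mod_eq_of_lt (by omega : i + k + 1 < m), h3, ← hv] at h2
      simp only [h1, Nat.add_zero]
      exact h2
  · intro k hk
    set d := j - i with hd
    have him : i ≤ m - d := by omega
    by_cases hki : k < i
    · by_cases hk1 : k + 1 < i
      · have h1 : (k + 1) % (m - d) = k + 1 := Nat.mod_eq_of_lt (by omega)
        have h2 := hf k (by omega)
        rw [Nat.mod_eq_of_lt (by omega : k + 1 < m)] at h2
        simp only [h1, if_pos hki, if_pos hk1]
        exact h2
      · have hk1' : k + 1 = i := by omega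
        have h1 : (k + 1) % (m - d) = k + 1 := Nat.mod_eq_of_lt (by omega)
        have h2 := hf k (by omega)
        rw [Nat.mod_eq_of_lt (by omega : k + 1 < m)] at h2
        simp only [h1, if_pos hki, if_neg (by omega : ¬ k + 1 < i)]
        have h3 : k + 1 + d = j := by omega
        rw [h3, ← hv, ← hk1']
        exact h2
    · by_cases hk1 : k + 1 < m - d
      · have h1 : (k + 1) % (m - d) = k + 1 := Nat.mod_eq_of_lt hk1
        have h2 := hf (k + d) (by omega)
        rw [Nat.mod_eq_of_lt (by omega : k + d + 1 < m)] at h2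
        simp only [h1, if_neg hki, if_neg (by omega : ¬ k + 1 < i)]
        have h3 : k + 1 + d = k + d + 1 := by omega
        rw [h3]
        exact h2
      · have hk1' : k + 1 = m - d := by omega
        have h1 : (k + 1) % (m - d) = 0 := by rw [hk1', Nat.mod_self]
        have h2 := hf (k + d) (by omega)
        have h3 : k + d + 1 = m := by omega
        rw [h3, Nat.mod_self] at h2
        simp only [h1, if_neg hki]
        by_cases hi0 : 0 < i
        · simp only [if_pos hi0]
          exact h2
        · have hi0' : i = 0 := by omega
          simp only [if_neg (by omega : ¬ (0:ℕ) < i)]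
          have h4 : 0 + d = j := by omega
          rw [h4, ← hv, hi0'] at *
          exact h2

private lemma aux_cycle_parity (G : MSGraph) (w : G.ClosedWalk) (hodd : Odd w.m)
    (h1 : w.m ≠ 1) (hinj : Function.Injective w.vert) : Odd w.saddleCount := by
  classical
  have hpos := w.pos
  haveI : NeZero w.m := ⟨by omega⟩
  haveI : Fact (1 < w.m) := ⟨by omega⟩
  have hvne : ∀ i : ZMod w.m, w.vert i ≠ w.vert (i + 1) := by
    intro i h
    have h2 := hinj h
    have h3 : (1 : ZMod w.m) = 0 := by linear_combination -h2
    exact one_ne_zero h3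
  set D : ZMod w.m → Bool := fun i => decide (G.src (w.edge i) = w.vert i) with hD
  have hDt : ∀ i : ZMod w.m, D i = true →
      G.src (w.edge i) = w.vert i ∧ G.tgt (w.edge i) = w.vert (i + 1) := by
    intro i hi
    have hs : G.src (w.edge i) = w.vert i := by
      have := of_decide_eq_true hi
      exact this
    rcases w.joins i with ⟨h1', h2'⟩ | ⟨h1', h2'⟩
    · exact ⟨h1', h2'⟩
    · exact absurd (hs ▸ h1' : w.vert i = w.vert (i+1)).symm.symm (by rw [← hs, h1']; exact (hvne i (by rw [← hs, h1'])).elim)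
  have hDf : ∀ i : ZMod w.m, D i = false →
      G.src (w.edge i) = w.vert (i + 1) ∧ G.tgt (w.edge i) = w.vert i := by
    intro i hi
    have hs : ¬ G.src (w.edge i) = w.vert i := of_decide_eq_false hi
    rcases w.joins i with ⟨h1', h2'⟩ | ⟨h1', h2'⟩
    · exact absurd h1' hs
    · exact ⟨h1', h2'⟩
  have hSad : ∀ i : ZMod w.m, w.SaddleAt i ↔ (D i = D (i + 1)) := by
    intro i
    constructor
    · rintro (⟨ht, hs⟩ | ⟨hs, ht⟩)
      · have hDi : D i = true := by
          cases hDi : D i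
          · exact absurd ((hDf i hDi).2.symm.trans ht) (hvne i)
          · rfl
        have hDi1 : D (i + 1) = true := by
          cases hDi1 : D (i + 1)
          · exact absurd (hs.symm.trans (hDf (i+1) hDi1).1) (hvne (i+1))
          · rfl
        rw [hDi, hDi1]
      · have hDi : D i = false := by
          cases hDi : D i
          · rfl
          · exact absurd ((hDt i hDi).1.symm.trans hs) (hvne i)
        have hDi1 : D (i + 1) = false := by
          cases hDi1 : D (i + 1)
          · rfl
          · exact absurd (ht.symm.trans (hDt (i+1) hDi1).2) (hvne (i+1))
        rw [hDi, hDi1]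
    · intro hEq
      cases hDi : D i
      · rw [hDi] at hEq
        exact Or.inr ⟨(hDf i hDi).1, (hDf (i+1) hEq.symm).2⟩
      · rw [hDi] at hEq
        exact Or.inl ⟨(hDt i hDi).2, (hDt (i+1) hEq.symm).1⟩
  have hcount : w.saddleCount = (Finset.univ.filter (fun i => D i = D (i + 1))).card := by
    rw [MSGraph.ClosedWalk.saddleCount, Nat.card_eq_fintype_card, Fintype.card_subtype]
    congr 1
    apply Finset.filter_congr
    intro i _
    simp [hSad i]
  have hsplit := Finset.card_filter_add_card_filter_not
    (s := (Finset.univ : Finset (ZMod w.m))) (p := fun i => D i = D (i + 1))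
  rw [Finset.card_univ, ZMod.card] at hsplit
  have hT : Even ((Finset.univ.filter (fun i : ZMod w.m => ¬ (D i = D (i + 1)))).card) := by
    rw [even_iff_two_dvd, ← ZMod.natCast_eq_zero_iff]
    have hc : (((Finset.univ.filter (fun i : ZMod w.m => ¬ (D i = D (i + 1)))).card : ℕ) : ZMod 2)
        = ∑ i : ZMod w.m, ((if D i then (1 : ZMod 2) else 0) + (if D (i+1) then (1 : ZMod 2) else 0)) := by
      rw [Finset.card_filter]
      push_cast
      apply Finset.sum_congr rfl
      intro i _
      cases hDi : D i <;> cases hDi1 : D (i+1) <;> simp [hDi, hDi1] <;> decide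
    rw [hc, Finset.sum_add_distrib]
    have hre : ∑ i : ZMod w.m, (if D (i + 1) then (1 : ZMod 2) else 0)
        = ∑ i : ZMod w.m, (if D i then (1 : ZMod 2) else 0) := by
      exact Fintype.sum_equiv (Equiv.addRight (1 : ZMod w.m)) _ _ (fun i => rfl)
    rw [hre, ← two_mul]
    have h2z : (2 : ZMod 2) = 0 := by decide
    rw [h2z, zero_mul]
  rw [hcount]
  rcases hodd with ⟨k, hk⟩
  rcases hT with ⟨t, ht⟩
  exact ⟨k - t, by omega⟩

private lemma aux_noOdd (G : MSGraph) (hMS : G.IsMS)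
    (hnodd : ¬ ∃ w : G.ClosedWalk, w.IsCycle ∧ Odd w.saddleCount) :
    ∀ m, ∀ f : ℕ → G.V × G.E, auxCWF G m f → Odd m → False := by
  intro m
  induction m using Nat.strong_induction_on with
  | _ m IH =>
  intro f hf hodd
  have hpos : 0 < m := hodd.pos
  by_cases h1 : m = 1
  · subst h1
    have h2 := hf 0 (by omega)
    rcases h2 with ⟨hs, ht⟩ | ⟨hs, ht⟩ <;>
      exact aux_noLoop G hMS (f 0).2 (hs.trans ht.symm)
  by_cases hinj : ∀ i, i < m → ∀ j, j < m → (f i).1 = (f j).1 → i = j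
  · haveI : NeZero m := ⟨by omega⟩
    haveI : Fact (1 < m) := ⟨by omega⟩
    have hjoins : ∀ i : ZMod m,
        G.EdgeJoins ((f i.val).2) ((f i.val).1) ((f ((i + 1).val)).1) := by
      intro i
      have hval : (i + 1).val = (i.val + 1) % m := by
        rw [ZMod.val_add, ZMod.val_one]
      rw [hval]
      exact hf i.val i.val_lt
    set w : G.ClosedWalk :=
      { m := m, pos := hpos, vert := fun i => (f i.val).1, edge := fun i => (f i.val).2,
        joins := hjoins } with hw
    have hvi : Function.Injective w.vert := by
      intro a b h
      exact ZMod.val_injective m (hinj a.val a.val_lt b.val b.val_lt h)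
    have hei : Function.Injective w.edge := by
      intro a b h
      by_contra hne
      have ja := w.joins a
      have jb := w.joins b
      rw [show w.edge a = w.edge b from h] at ja
      have habs : a = b + 1 ∧ a + 1 = b → False := by
        rintro ⟨e1, e2⟩
        rw [← e2] at e1
        have h2z : (2 : ZMod m) = 0 := by linear_combination -e1
        have hdvd : m ∣ 2 := by
          rw [← ZMod.natCast_eq_zero_iff]
          push_cast
          exact h2z
        have := Nat.le_of_dvd (by norm_num) hdvd
        rcases hodd with ⟨k, hk⟩
        omega
      rcases ja with ⟨sa, ta⟩ | ⟨sa, ta⟩ <;> rcases jb with ⟨sb, tb⟩ | ⟨sb, tb⟩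
      · exact hne (hvi (sa.symm.trans sb))
      · exact habs ⟨hvi (sa.symm.trans sb), hvi (ta.symm.trans tb)⟩
      · exact habs ⟨hvi (ta.symm.trans tb), hvi (sa.symm.trans sb)⟩
      · exact hne (add_right_cancel (hvi (sa.symm.trans sb)))
    exact hnodd ⟨w, ⟨hei, hvi⟩, aux_cycle_parity G w hodd h1 hvi⟩
  · push_neg at hinj
    obtain ⟨i, hi, j, hj, hv, hne⟩ := hinj
    have key : ∀ i j : ℕ, i < j → j < m → (f i).1 = (f j).1 → False := by
      intro i j hij hj hv
      obtain ⟨hc1, hc2⟩ := aux_cut G hf hij hj hv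
      rcases Nat.even_or_odd (j - i) with he | ho
      · have ho2 : Odd (m - (j - i)) := Nat.Odd.sub_even (by omega) hodd he
        exact IH (m - (j - i)) (by omega) _ hc2 ho2
      · exact IH (j - i) (by omega) _ hc1 ho
    rcases Nat.lt_or_ge i j with h | h
    · exact key i j h hj hv
    · exact key j i (by omega) hi hv.symm

/-- A walk from `v` to `w` of length `n` in the underlying undirected graph. -/
private def auxWK (G : MSGraph) (v : G.V) (n : ℕ) (f : ℕ → G.V) (g : ℕ → G.E) (w : G.V) : Prop :=
  f 0 = v ∧ f n = w ∧ ∀ i, i < n → G.EdgeJoins (g i) (f i) (f (i + 1))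

private lemma auxWK_snoc (G : MSGraph) {v w x : G.V} {n f g} (h : auxWK G v n f g w)
    {e : G.E} (he : G.EdgeJoins e w x) :
    auxWK G v (n + 1) (fun i => if i ≤ n then f i else x) (fun i => if i < n then g i else e) x := by
  obtain ⟨h0, hn, hj⟩ := h
  refine ⟨?_, ?_, ?_⟩
  · simp only [Nat.zero_le, if_pos]; exact h0
  · simp only [if_neg (by omega : ¬ n + 1 ≤ n)]
  · intro i hi
    by_cases hin : i < n
    · simp only [if_pos hin, if_pos (by omega : i ≤ n), if_pos (by omega : i + 1 ≤ n)]
      exact hj i hin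
    · have hieq : i = n := by omega
      rw [hieq]
      simp only [if_neg (lt_irrefl n), if_pos (le_refl n), if_neg (show ¬ n + 1 ≤ n by omega), hn]
      exact he

private lemma auxWK_exists (G : MSGraph) (e₀ : G.E) {v w : G.V}
    (h : Relation.ReflTransGen G.Adj v w) : ∃ n f g, auxWK G v n f g w := by
  induction h with
  | refl => exact ⟨0, fun _ => v, fun _ => e₀, rfl, rfl, by omega⟩
  | tail _ hadj ih =>
    obtain ⟨n, f, g, hw⟩ := ih
    obtain ⟨e, he⟩ := hadj
    exact ⟨n + 1, _, _, auxWK_snoc G hw (he : G.EdgeJoins e _ _)⟩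

private lemma auxWK_reverse (G : MSGraph) {v w : G.V} {n f g} (h : auxWK G v n f g w) :
    auxWK G w n (fun i => f (n - i)) (fun i => g (n - 1 - i)) v := by
  obtain ⟨h0, hn, hj⟩ := h
  refine ⟨?_, ?_, ?_⟩
  · simp only [Nat.sub_zero]; exact hn
  · simp only [Nat.sub_self]; exact h0
  · intro i hi
    have hj' := hj (n - (i + 1)) (by omega)
    have e1 : n - (i + 1) + 1 = n - i := by omega
    rw [e1] at hj'
    show G.EdgeJoins (g (n - 1 - i)) (f (n - i)) (f (n - (i + 1)))
    have e3 : n - 1 - i = n - (i + 1) := by omega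
    rw [e3]
    exact aux_joins_symm G hj'

private lemma auxWK_comp (G : MSGraph) {v w x : G.V} {n f g n' f' g'}
    (h1 : auxWK G v n f g w) (h2 : auxWK G w n' f' g' x) :
    auxWK G v (n + n') (fun i => if i < n then f i else f' (i - n))
      (fun i => if i < n then g i else g' (i - n)) x := by
  obtain ⟨h10, h1n, h1j⟩ := h1
  obtain ⟨h20, h2n, h2j⟩ := h2
  refine ⟨?_, ?_, ?_⟩
  · by_cases h0 : 0 < n
    · simp only [if_pos h0]; exact h10
    · have hn0 : n = 0 := by omega
      have hv : f' 0 = v := by rw [h20, ← h1n, hn0, h10]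
      simp only [hn0, lt_irrefl, if_neg, Nat.sub_zero] at *
      simpa using hv
  · simp only [if_neg (by omega : ¬ n + n' < n), Nat.add_sub_cancel_left]
    exact h2n
  · intro i hi
    by_cases hin : i < n
    · by_cases hin1 : i + 1 < n
      · simp only [if_pos hin, if_pos hin1]
        exact h1j i hin
      · have hieq : i + 1 = n := by omega
        simp only [if_pos hin, if_neg (show ¬ i + 1 < n by omega)]
        have hz : i + 1 - n = 0 := by omega
        rw [hz, h20, ← h1n, ← hieq]
        exact h1j i hin
    · simp only [if_neg hin, if_neg (by omega : ¬ i + 1 < n)]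
      have e1 : i + 1 - n = i - n + 1 := by omega
      rw [e1]
      exact h2j (i - n) (by omega)

private lemma auxWK_toCWF (G : MSGraph) {v : G.V} {n f g} (h : auxWK G v n f g v)
    (hn : 0 < n) : auxCWF G n (fun i => (f i, g i)) := by
  obtain ⟨h0, hnn, hj⟩ := h
  intro i hi
  by_cases hi1 : i + 1 < n
  · simp only [Nat.mod_eq_of_lt hi1]
    exact hj i hi
  · have hin : i + 1 = n := by omega
    have hj' := hj i hi
    rw [hin, hnn, ← h0] at hj'
    simpa [hin, Nat.mod_self] using hj'

end Aux

/-- A connected MS-graph with at least one saddle and no cycle with an odd number of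
saddles admits a partition of its edge set into two groups such that sequential edges lie
in distinct groups and incident non-sequential edges lie in the same group. -/

theorem exists_group_partition (G : MSGraph) (hMS : G.IsMS) (hconn : G.Connected)
    (hsaddle : ∃ v : G.V, G.IsSaddle v)
    (hnodd : ¬ ∃ w : G.ClosedWalk, w.IsCycle ∧ Odd w.saddleCount) :
    ∃ g : G.E → Bool, G.IsGroupPartition g := by
  classical
  obtain ⟨hne, hpath⟩ := hconn
  obtain ⟨v0⟩ := hne
  obtain ⟨vs, hs1, _⟩ := hsaddle
  obtain ⟨e₀, _⟩ := not_forall.mp hs1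
  set P : G.V → Prop := fun v => ∃ n f g, auxWK G v0 n f g v ∧ Odd n with hP
  have hNoOdd := aux_noOdd G hMS hnodd
  have hkey : ∀ v n f g, auxWK G v0 n f g v → (Odd n ↔ P v) := by
    intro v n f g hw
    constructor
    · intro h
      exact ⟨n, f, g, hw, h⟩
    · rintro ⟨n', f', g', hw', hodd'⟩
      by_contra hnodd'
      have hrev := auxWK_reverse G hw
      have hcomp := auxWK_comp G hw' hrev
      have hcw := auxWK_toCWF G hcomp (by rcases hodd' with ⟨k, hk⟩; omega)
      exact hNoOdd (n' + n) _ hcw (hodd'.add_even (Nat.not_odd_iff_even.mp hnodd'))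
  set χ : G.V → Bool := fun v => decide (P v) with hχ
  have hproper : ∀ e : G.E, χ (G.src e) ≠ χ (G.tgt e) := by
    intro e
    obtain ⟨n, f, g, hw⟩ := auxWK_exists G e₀ (hpath v0 (G.src e))
    have hw' := auxWK_snoc G hw (Or.inl ⟨rfl, rfl⟩ : G.EdgeJoins e (G.src e) (G.tgt e))
    have h1 := hkey _ _ _ _ hw
    have h2 := hkey _ _ _ _ hw'
    simp only [hχ, ne_eq, decide_eq_decide]
    rw [← h1, ← h2, Nat.odd_add_one]
    tauto
  refine ⟨fun e => χ (G.src e), ?_, ?_⟩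
  · rintro e e' ⟨hnee, h | h⟩
    · have := hproper e
      rw [h] at this
      exact this
    · have := hproper e'
      rw [h] at this
      exact this.symm
  · rintro e e' ⟨hnee, hcase⟩ hnseq
    rcases hcase with h | h | h | h
    · simp only [h]
    · exact absurd ⟨hnee, Or.inr h.symm⟩ hnseq
    · exact absurd ⟨hnee, Or.inl h⟩ hnseq
    · have p1 := hproper e
      have p2 := hproper e'
      rw [h] at p1
      simp only []
      revert p1 p2
      cases χ (G.src e) <;> cases χ (G.src e') <;> cases χ (G.tgt e') <;> simp
end

section
/- Let G be a connected MS-graph that has at least one saddle and contains no cycle with an odd number of saddles, and fix a group partition of G into a first group G₁ and a second group G₂. Two integer framings f and f' of G are equivalent if and only if Σ_{e ∈ G₁} f(e) − Σ_{e ∈ G₂} f(e) = Σ_{e ∈ G₁} f'(e) − Σ_{e ∈ G₂} f'(e). -/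
namespace MSGraphProof

variable (G : MSGraph) (g : G.E → Bool)

/-- The sign of an edge: `1` for the first group, `-1` for the second. -/
def s (e : G.E) : ℤ := if g e then 1 else -1

lemma s_sq (e : G.E) : s G g e * s G g e = 1 := by
  unfold s; split <;> norm_num

lemma s_mul_of_ne {e e' : G.E} (h : g e ≠ g e') : s G g e * s G g e' = -1 := by
  unfold s; cases hb : g e <;> cases hb' : g e' <;> simp_all

lemma s_mul_of_eq {e e' : G.E} (h : g e = g e') : s G g e * s G g e' = 1 := by
  unfold s; cases hb : g e <;> cases hb' : g e' <;> simp_all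

/-- The signed total framing. -/
def S (f : G.E → ℤ) : ℤ := ∑ e, s G g e * f e

lemma S_eq_filter (f : G.E → ℤ) :
    S G g f = (∑ e ∈ Finset.univ.filter (fun e => g e = true), f e) -
      (∑ e ∈ Finset.univ.filter (fun e => g e = false), f e) := by
  unfold S
  rw [← Finset.sum_filter_add_sum_filter_not Finset.univ (fun e => g e = true)]
  have h1 : ∑ e ∈ Finset.univ.filter (fun e => g e = true), s G g e * f e
      = ∑ e ∈ Finset.univ.filter (fun e => g e = true), f e := by
    refine Finset.sum_congr rfl fun x hx => ?_
    simp only [Finset.mem_filter] at hx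
    simp [s, hx.2]
  have h2 : ∑ e ∈ Finset.univ.filter (fun e => ¬ (g e = true)), s G g e * f e
      = -∑ e ∈ Finset.univ.filter (fun e => g e = false), f e := by
    rw [← Finset.sum_neg_distrib]
    refine Finset.sum_congr (by simp) fun x hx => ?_
    simp only [Finset.mem_filter] at hx
    simp [s, hx.2]
  rw [h1, h2]
  ring

lemma sum_pair (e e' : G.E) (a b : ℤ) :
    ∑ x, s G g x * ((if x = e then a else 0) + (if x = e' then b else 0)) =
      s G g e * a + s G g e' * b := by
  simp [mul_add, mul_ite, mul_zero, Finset.sum_add_distrib, Finset.sum_ite_eq']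

/-- Transfer vector: adds `k` at `e` and `∓k` at `e'` depending on the groups. -/
def tvec (e e' : G.E) (k : ℤ) : G.E → ℤ := fun x =>
  (if x = e then k else 0) - s G g e * s G g e' * (if x = e' then k else 0)

lemma tvec_comp (e e₁ e' : G.E) (k : ℤ) (x : G.E) :
    tvec G g e e₁ k x + tvec G g e₁ e' (s G g e * s G g e₁ * k) x = tvec G g e e' k x := by
  unfold tvec s
  split_ifs <;> ring

lemma S_add_tvec (f : G.E → ℤ) (e e' : G.E) (k : ℤ) :
    S G g (fun x => f x + tvec G g e e' k x) = S G g f := by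
  unfold S tvec
  simp only [mul_add, mul_sub, mul_ite, mul_zero, Finset.sum_add_distrib,
    Finset.sum_sub_distrib, Finset.sum_ite_eq', Finset.mem_univ, if_true]
  have hsq := s_sq G g e'
  linear_combination (-(s G g e * k)) * hsq

lemma step_tvec (hg : G.IsGroupPartition g) (f : G.E → ℤ) {e e' : G.E}
    (h : G.Incident e e') (k : ℤ) :
    G.Step (fun x => (f x : WithTop ℤ))
      (fun x => ((f x + tvec G g e e' k x : ℤ) : WithTop ℤ)) := by
  by_cases hseq : G.Sequential e e'
  · left
    refine ⟨k, e, e', hseq, ?_⟩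
    have hne : e ≠ e' := hseq.1
    have hmul : s G g e * s G g e' = -1 := s_mul_of_ne G g (hg.1 e e' hseq)
    have ht : ∀ x, tvec G g e e' k x = if x = e ∨ x = e' then k else 0 := by
      intro x
      unfold tvec
      rw [hmul]
      by_cases h1 : x = e <;> by_cases h2 : x = e'
      · exact absurd (h1.symm.trans h2) hne
      · simp [h1, h2, hne, Ne.symm hne]
      · simp [h1, h2, hne, Ne.symm hne]
      · simp [h1, h2, hne, Ne.symm hne]
    funext x
    by_cases hx : x = e ∨ x = e'
    · rw [ht x, if_pos hx, if_pos hx]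
      push_cast
      ring_nf
    · rw [ht x, if_neg hx, if_neg hx, add_zero]
  · right
    refine ⟨k, e, e', h, hseq, ?_⟩
    have hne : e ≠ e' := h.1
    have hmul : s G g e * s G g e' = 1 := s_mul_of_eq G g (hg.2 e e' h hseq)
    have ht : ∀ x, tvec G g e e' k x
        = if x = e then k else if x = e' then -k else 0 := by
      intro x
      unfold tvec
      rw [hmul]
      by_cases h1 : x = e <;> by_cases h2 : x = e'
      · exact absurd (h1.symm.trans h2) hne
      · simp [h1, h2, hne, Ne.symm hne]
      · simp [h1, h2, hne, Ne.symm hne]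
      · simp [h1, h2, hne, Ne.symm hne]
    funext x
    by_cases h1 : x = e
    · rw [ht x, if_pos h1, if_pos h1]
      push_cast
      ring_nf
    · by_cases h2 : x = e'
      · rw [ht x, if_neg h1, if_pos h2, if_neg h1, if_pos h2]
        push_cast
        ring_nf
      · rw [ht x, if_neg h1, if_neg h2, if_neg h1, if_neg h2, add_zero]

/-- Any two edges of a connected graph are joined by a chain of incidences. -/
lemma edge_reach (hconn : G.Connected) (e e' : G.E) :
    Relation.ReflTransGen G.Incident e e' := by
  have key : ∀ v w : G.V, Relation.ReflTransGen G.Adj v w →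
      ∀ a b : G.E, (G.src a = v ∨ G.tgt a = v) → (G.src b = w ∨ G.tgt b = w) →
      Relation.ReflTransGen G.Incident a b := by
    intro v w h
    induction h using Relation.ReflTransGen.head_induction_on with
    | refl =>
      intro a b ha hb
      by_cases hab : a = b
      · exact hab ▸ Relation.ReflTransGen.refl
      · refine Relation.ReflTransGen.single ⟨hab, ?_⟩
        rcases ha with h1 | h1 <;> rcases hb with h2 | h2
        · exact Or.inl (h1.trans h2.symm)
        · exact Or.inr (Or.inl (h1.trans h2.symm))
        · exact Or.inr (Or.inr (Or.inl (h1.trans h2.symm)))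
        · exact Or.inr (Or.inr (Or.inr (h1.trans h2.symm)))
    | head hadj _ ih =>
      rename_i v' c _
      intro a b ha hb
      obtain ⟨e₀, he₀⟩ := hadj
      have he₀v : G.src e₀ = v' ∨ G.tgt e₀ = v' := by
        rcases he₀ with ⟨h1, _⟩ | ⟨_, h2⟩
        · exact Or.inl h1
        · exact Or.inr h2
      have he₀c : G.src e₀ = c ∨ G.tgt e₀ = c := by
        rcases he₀ with ⟨_, h2⟩ | ⟨h1, _⟩
        · exact Or.inr h2
        · exact Or.inl h1
      have step1 : Relation.ReflTransGen G.Incident a e₀ := by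
        by_cases hab : a = e₀
        · exact hab ▸ Relation.ReflTransGen.refl
        · refine Relation.ReflTransGen.single ⟨hab, ?_⟩
          rcases ha with h1 | h1 <;> rcases he₀v with h2 | h2
          · exact Or.inl (h1.trans h2.symm)
          · exact Or.inr (Or.inl (h1.trans h2.symm))
          · exact Or.inr (Or.inr (Or.inl (h1.trans h2.symm)))
          · exact Or.inr (Or.inr (Or.inr (h1.trans h2.symm)))
      exact step1.trans (ih e₀ b he₀c hb)
  exact key (G.src e) (G.src e') (hconn.2 _ _) e e' (Or.inl rfl) (Or.inl rfl)

/-- Adding any transfer vector yields an equivalent framing. -/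
lemma equiv_add_tvec (hg : G.IsGroupPartition g) (hconn : G.Connected) (e e' : G.E) :
    ∀ (k : ℤ) (f : G.E → ℤ),
      G.FramingEquiv (fun x => (f x : WithTop ℤ))
        (fun x => ((f x + tvec G g e e' k x : ℤ) : WithTop ℤ)) := by
  have h := edge_reach G hconn e e'
  induction h using Relation.ReflTransGen.head_induction_on with
  | refl =>
    intro k f
    have hfe : (fun x => ((f x + tvec G g e' e' k x : ℤ) : WithTop ℤ))
        = fun x => (f x : WithTop ℤ) := by
      funext x
      simp [tvec, s_sq]
    rw [hfe]
    exact Relation.ReflTransGen.refl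
  | head hinc _ ih =>
    rename_i a c _
    intro k f
    have step1 : G.Step (fun x => (f x : WithTop ℤ))
        (fun x => ((f x + tvec G g a c k x : ℤ) : WithTop ℤ)) :=
      step_tvec G g hg f hinc k
    have step2 := ih (s G g a * s G g c * k) (fun x => f x + tvec G g a c k x)
    have hrw : (fun x => (((fun x => f x + tvec G g a c k x) x
          + tvec G g c e' (s G g a * s G g c * k) x : ℤ) : WithTop ℤ))
        = fun x => ((f x + tvec G g a e' k x : ℤ) : WithTop ℤ) := by
      funext x
      rw [add_assoc, tvec_comp]
    rw [hrw] at step2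
    exact Relation.ReflTransGen.head step1 step2

lemma reach_off (hg : G.IsGroupPartition g) (hconn : G.Connected) (e0 : G.E)
    (A : Finset G.E) : ∀ f f' : G.E → ℤ, e0 ∉ A →
    (∀ x, x ≠ e0 → x ∉ A → f x = f' x) → S G g f = S G g f' →
    G.FramingEquiv (fun x => (f x : WithTop ℤ)) (fun x => (f' x : WithTop ℤ)) := by
  induction A using Finset.induction_on with
  | empty =>
    intro f f' _ hagree hS
    have hagree' : ∀ x, x ≠ e0 → f x = f' x := fun x hx => hagree x hx (by simp)
    have hsum : ∑ x, s G g x * (f x - f' x) = 0 := by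
      have : ∑ x, s G g x * (f x - f' x) = S G g f - S G g f' := by
        unfold S
        rw [← Finset.sum_sub_distrib]
        exact Finset.sum_congr rfl fun x _ => by ring
      rw [this, hS, sub_self]
    have hsingle : ∑ x, s G g x * (f x - f' x) = s G g e0 * (f e0 - f' e0) := by
      refine Finset.sum_eq_single_of_mem e0 (Finset.mem_univ _) fun b _ hb => ?_
      rw [hagree' b hb]; ring
    have heq0 : s G g e0 * (f e0 - f' e0) = 0 := by rw [← hsingle, hsum]
    have hs : s G g e0 = 1 ∨ s G g e0 = -1 := by unfold s; split <;> simp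
    have : f e0 = f' e0 := by rcases hs with h | h <;> rw [h] at heq0 <;> linarith
    have hff : f = f' := funext fun x => by
      by_cases hx : x = e0
      · exact hx ▸ this
      · exact hagree' x hx
    rw [hff]
    exact Relation.ReflTransGen.refl
  | @insert a B ha ih =>
    intro f f' hA hagree hS
    have hae0 : a ≠ e0 := fun h => hA (h ▸ Finset.mem_insert_self a _)
    set k := f' a - f a with hk
    set f₂ := fun x => f x + tvec G g a e0 k x with hf₂
    have h1 : G.FramingEquiv (fun x => (f x : WithTop ℤ)) (fun x => (f₂ x : WithTop ℤ)) :=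
      equiv_add_tvec G g hg hconn a e0 k f
    have he0B : e0 ∉ B := fun h => hA (Finset.mem_insert_of_mem h)
    have hagree2 : ∀ x, x ≠ e0 → x ∉ B → f₂ x = f' x := by
      intro x hx hxB
      by_cases hxa : x = a
      · subst hxa
        have ht : tvec G g x e0 k x = k := by
          simp [tvec, hae0]
        simp only [hf₂]
        rw [ht]
        omega
      · have hxiA : x ∉ insert a B := by
          simp [Finset.mem_insert, hxa, hxB]
        have hfx := hagree x hx hxiA
        have ht : tvec G g a e0 k x = 0 := by
          simp [tvec, hxa, hx]
        simp only [hf₂]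
        rw [ht]
        omega
    have hS2 : S G g f₂ = S G g f' := by
      rw [hf₂, S_add_tvec, hS]
    exact h1.trans (ih f₂ f' he0B hagree2 hS2)

lemma step_preserve (hg : G.IsGroupPartition g) {h2 : G.E → WithTop ℤ} (u : G.E → ℤ)
    (hs : G.Step (fun x => (u x : WithTop ℤ)) h2) :
    ∃ u' : G.E → ℤ, (h2 = fun x => (u' x : WithTop ℤ)) ∧ S G g u' = S G g u := by
  rcases hs with ⟨k, e, e', hseq, rfl⟩ | ⟨k, e, e', hinc, hnseq, rfl⟩
  · have hne : e ≠ e' := hseq.1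
    refine ⟨fun x => if x = e ∨ x = e' then u x + k else u x, ?_, ?_⟩
    · funext x
      by_cases hx : x = e ∨ x = e'
      · simp only [if_pos hx]
        push_cast
        ring_nf
      · simp only [if_neg hx]
    · have hrw : ∀ x, (if x = e ∨ x = e' then u x + k else u x)
          = u x + ((if x = e then k else 0) + (if x = e' then k else 0)) := by
        intro x
        by_cases h1 : x = e <;> by_cases h2 : x = e'
        · exact absurd (h1.symm.trans h2) hne
        · simp [h1, h2, hne, Ne.symm hne]
        · simp [h1, h2, hne, Ne.symm hne]
        · simp [h1, h2, hne, Ne.symm hne]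
      unfold S
      simp only [hrw, mul_add, Finset.sum_add_distrib, mul_ite, mul_zero,
        Finset.sum_ite_eq', Finset.mem_univ, if_true]
      have hgz : s G g e + s G g e' = 0 := by
        have hgne := hg.1 e e' hseq
        unfold s; cases hb : g e <;> cases hb' : g e' <;> simp_all
      linear_combination k * hgz
  · have hne : e ≠ e' := hinc.1
    refine ⟨fun x => if x = e then u x + k else if x = e' then u x + (-k) else u x, ?_, ?_⟩
    · funext x
      by_cases h1 : x = e
      · simp only [if_pos h1]
        push_cast
        ring_nf
      · by_cases h2 : x = e'
        · simp only [if_neg h1, if_pos h2]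
          push_cast
          ring_nf
        · simp only [if_neg h1, if_neg h2]
    · have hrw : ∀ x, (if x = e then u x + k else if x = e' then u x + (-k) else u x)
          = u x + ((if x = e then k else 0) + (if x = e' then -k else 0)) := by
        intro x
        by_cases h1 : x = e <;> by_cases h2 : x = e'
        · exact absurd (h1.symm.trans h2) hne
        · simp [h1, h2, hne, Ne.symm hne]
        · simp [h1, h2, hne, Ne.symm hne]
        · simp [h1, h2, hne, Ne.symm hne]
      unfold S
      simp only [hrw, mul_add, Finset.sum_add_distrib, mul_ite, mul_zero,
        Finset.sum_ite_eq', Finset.mem_univ, if_true]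
      have hgz : s G g e = s G g e' := by
        have hgeq := hg.2 e e' hinc hnseq
        unfold s; rw [hgeq]
      linear_combination k * hgz

lemma rtg_preserve (hg : G.IsGroupPartition g) {h1 h2 : G.E → WithTop ℤ}
    (hr : G.FramingEquiv h1 h2) :
    ∀ u : G.E → ℤ, h1 = (fun x => (u x : WithTop ℤ)) →
      ∃ u', (h2 = fun x => (u' x : WithTop ℤ)) ∧ S G g u' = S G g u := by
  induction hr with
  | refl => exact fun u hu => ⟨u, hu, rfl⟩
  | tail _ hstep ih =>
    intro u hu
    obtain ⟨u1, hu1, hS1⟩ := ih u hu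
    obtain ⟨u2, hu2, hS2⟩ := step_preserve G g hg u1 (hu1 ▸ hstep)
    exact ⟨u2, hu2, hS2.trans hS1⟩

end MSGraphProof

/-- Let `G` be a connected MS-graph with at least one saddle and no cycle with an odd
number of saddles, with a fixed group partition (first group `g e = true`, second group
`g e = false`).  Two integer framings are equivalent iff they have the same difference of
total framings of the first and second groups. -/
theorem framingEquiv_iff_groupDiff_eq (G : MSGraph) (hMS : G.IsMS) (hconn : G.Connected)
    (hsaddle : ∃ v : G.V, G.IsSaddle v)
    (hnodd : ¬ ∃ w : G.ClosedWalk, w.IsCycle ∧ Odd w.saddleCount)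
    (g : G.E → Bool) (hg : G.IsGroupPartition g) (f f' : G.E → ℤ) :
    G.FramingEquiv (fun e => (f e : WithTop ℤ)) (fun e => (f' e : WithTop ℤ)) ↔
      (∑ e ∈ Finset.univ.filter (fun e => g e = true), f e) -
          (∑ e ∈ Finset.univ.filter (fun e => g e = false), f e) =
        (∑ e ∈ Finset.univ.filter (fun e => g e = true), f' e) -
          (∑ e ∈ Finset.univ.filter (fun e => g e = false), f' e) := by
  rw [← MSGraphProof.S_eq_filter G g f, ← MSGraphProof.S_eq_filter G g f']
  constructor
  · intro h
    obtain ⟨u', hu', hS⟩ := MSGraphProof.rtg_preserve G g hg h f rfl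
    have : f' = u' := funext fun x => by
      have := congrFun hu' x
      exact_mod_cast this
    rw [this, hS]
  · intro hS
    cases isEmpty_or_nonempty G.E with
    | inl hE =>
      have : (fun e => (f e : WithTop ℤ)) = fun e => (f' e : WithTop ℤ) :=
        funext fun x => hE.elim x
      rw [this]
      exact Relation.ReflTransGen.refl
    | inr hE =>
      obtain ⟨e0⟩ := hE
      refine MSGraphProof.reach_off G g hg hconn e0 (Finset.univ.erase e0) f f'
        (Finset.notMem_erase e0 _) ?_ hS
      intro x hx hxA
      exact absurd (Finset.mem_erase.mpr ⟨hx, Finset.mem_univ x⟩) hxA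
end

section
/- Let G be an MS-graph with a group partition of its edge set into a first group G₁ and a second group G₂. If two integer framings f and f' of G are equivalent, then Σ_{e ∈ G₁} f(e) − Σ_{e ∈ G₂} f(e) = Σ_{e ∈ G₁} f'(e) − Σ_{e ∈ G₂} f'(e); that is, operation (1) applied to two sequential edges (which lie in distinct groups) and operation (2) applied to two incident non-sequential edges (which lie in the same group) both preserve the difference of the total framings of the two groups. -/
/-- The signed term of a framing at an edge. -/
noncomputable def grpTerm (G : MSGraph) (g : G.E → Bool) (F : G.E → WithTop ℤ) (x : G.E) :
    WithTop ℤ :=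
  if g x then F x else WithTop.map Neg.neg (F x)

/-- The signed total of a framing. -/
noncomputable def grpD (G : MSGraph) (g : G.E → Bool) (F : G.E → WithTop ℤ) : WithTop ℤ :=
  ∑ x, grpTerm G g F x

lemma mapNeg_add_coe (a : WithTop ℤ) (k : ℤ) :
    WithTop.map Neg.neg (a + (k : WithTop ℤ)) =
      WithTop.map Neg.neg a + ((-k : ℤ) : WithTop ℤ) := by
  cases a with
  | top => rfl
  | coe a =>
    show WithTop.map Neg.neg ((a : WithTop ℤ) + (k : WithTop ℤ)) = _
    rw [← WithTop.coe_add, WithTop.map_coe, WithTop.map_coe, ← WithTop.coe_add]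
    norm_num [add_comm]

lemma grpTerm_add (G : MSGraph) (g : G.E → Bool) (F : G.E → WithTop ℤ) (x : G.E) (k : ℤ) :
    grpTerm G g (Function.update F x (F x + (k : WithTop ℤ))) x
      = grpTerm G g F x + (((if g x then k else -k) : ℤ) : WithTop ℤ) := by
  unfold grpTerm
  by_cases h : g x <;> simp [h, mapNeg_add_coe]

lemma grpD_step (G : MSGraph) (g : G.E → Bool) (hg : G.IsGroupPartition g)
    (F F' : G.E → WithTop ℤ) (h : G.Step F F') : grpD G g F' = grpD G g F := by
  have key : ∀ (e e' : G.E) (a b : ℤ), e ≠ e' →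
      (if g e then a else -a) + (if g e' then b else -b) = 0 →
      F' = (fun x => if x = e then F x + (a : WithTop ℤ)
            else if x = e' then F x + (b : WithTop ℤ) else F x) →
      grpD G g F' = grpD G g F := by
    intro e e' a b hne hzero hF'
    have hterm : ∀ x, grpTerm G g F' x = grpTerm G g F x +
        (((if x = e then (if g e then a else -a)
           else if x = e' then (if g e' then b else -b) else 0 : ℤ)) : WithTop ℤ) := by
      intro x
      by_cases hxe : x = e
      · subst hxe
        unfold grpTerm
        by_cases h : g x <;> simp [hF', h, mapNeg_add_coe]
      · by_cases hxe' : x = e'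
        · subst hxe'
          unfold grpTerm
          by_cases h : g x <;> simp [hF', hxe, h, mapNeg_add_coe]
        · unfold grpTerm
          simp [hF', hxe, hxe']
    unfold grpD
    rw [Finset.sum_congr rfl (fun x _ => hterm x), Finset.sum_add_distrib]
    have : (∑ x : G.E, (((if x = e then (if g e then a else -a)
           else if x = e' then (if g e' then b else -b) else 0 : ℤ)) : WithTop ℤ))
        = (((∑ x : G.E, (if x = e then (if g e then a else -a)
           else if x = e' then (if g e' then b else -b) else 0 : ℤ)) : ℤ) : WithTop ℤ) := by
      exact (WithTop.coe_sum _ _).symm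
    rw [this]
    have hsum : (∑ x : G.E, (if x = e then (if g e then a else -a)
           else if x = e' then (if g e' then b else -b) else 0 : ℤ)) = 0 := by
      rw [Finset.sum_eq_add_of_mem e e' (Finset.mem_univ _) (Finset.mem_univ _) hne ?_]
      · simpa [hne, Ne.symm hne] using hzero
      · intro k _ hk; simp [hk.1, hk.2]
    rw [hsum]
    simp
  rcases h with ⟨k, e, e', hseq, hF'⟩ | ⟨k, e, e', hinc, hnseq, hF'⟩
  · have hne := hseq.1
    have hgne := hg.1 e e' hseq
    refine key e e' k k hne ?_ ?_
    · cases hge : g e <;> cases hge' : g e' <;> simp_all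
    · funext x
      by_cases hxe : x = e
      · simp [hF', hxe]
      · by_cases hxe' : x = e'
        · simp [hF', hxe, hxe']
        · simp [hF', hxe, hxe']
  · have hne := hinc.1
    have hgeq := hg.2 e e' hinc hnseq
    refine key e e' k (-k) hne ?_ ?_
    · cases hge : g e <;> cases hge' : g e' <;> simp_all
    · funext x
      by_cases hxe : x = e
      · simp [hF', hxe]
      · by_cases hxe' : x = e'
        · simp [hF', hxe, hxe']
        · simp [hF', hxe, hxe']

lemma grpD_equiv (G : MSGraph) (g : G.E → Bool) (hg : G.IsGroupPartition g)
    (F F' : G.E → WithTop ℤ) (h : G.FramingEquiv F F') : grpD G g F' = grpD G g F := by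
  induction h with
  | refl => rfl
  | tail _ hstep ih => rw [grpD_step G g hg _ _ hstep, ih]

lemma grpD_coe (G : MSGraph) (g : G.E → Bool) (f : G.E → ℤ) :
    grpD G g (fun e => (f e : WithTop ℤ))
      = (((∑ x : G.E, if g x then f x else -f x) : ℤ) : WithTop ℤ) := by
  unfold grpD grpTerm
  rw [WithTop.coe_sum]
  refine Finset.sum_congr rfl fun x _ => ?_
  by_cases h : g x <;> simp [h, WithTop.map_coe]

/-- For an MS-graph with a group partition (first group `g e = true`, second group
`g e = false`), the elementary operations preserve the difference of the total framings of
the two groups: equivalent integer framings have equal differences. -/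
theorem framingEquiv_preserves_groupDiff (G : MSGraph) (hMS : G.IsMS)
    (g : G.E → Bool) (hg : G.IsGroupPartition g) (f f' : G.E → ℤ)
    (h : G.FramingEquiv (fun e => (f e : WithTop ℤ)) (fun e => (f' e : WithTop ℤ))) :
    (∑ e ∈ Finset.univ.filter (fun e => g e = true), f e) -
        (∑ e ∈ Finset.univ.filter (fun e => g e = false), f e) =
      (∑ e ∈ Finset.univ.filter (fun e => g e = true), f' e) -
        (∑ e ∈ Finset.univ.filter (fun e => g e = false), f' e) := by
  have hD := grpD_equiv G g hg _ _ h
  rw [grpD_coe, grpD_coe, WithTop.coe_eq_coe] at hD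
  have split : ∀ (φ : G.E → ℤ), (∑ x : G.E, if g x then φ x else -φ x)
      = (∑ e ∈ Finset.univ.filter (fun e => g e = true), φ e) -
        (∑ e ∈ Finset.univ.filter (fun e => g e = false), φ e) := by
    intro φ
    rw [Finset.sum_ite, Finset.sum_neg_distrib, sub_eq_add_neg]
    have hfilt : Finset.filter (fun x => ¬ g x = true) (Finset.univ : Finset G.E)
        = Finset.filter (fun e => g e = false) Finset.univ := by
      ext x; simp
    rw [hfilt]
  rw [split, split] at hD
  rw [hD]
end

section
/- Let k : ℝ → ℝ be a continuous function, and for t > 0 set θ(t) = t·k(t) + log t and γ(t) = ((2 − t)·cos θ(t), (2 − t)·sin θ(t)) ∈ ℝ². Then the set of cluster points of γ along the filter 𝓝[>] 0 (t → 0⁺) is exactly the circle {p ∈ ℝ² : ‖p‖ = 2}: every point p with ‖p‖ = 2 is a cluster point of γ as t → 0⁺, and no point with ‖p‖ ≠ 2 is a cluster point of γ as t → 0⁺. -/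
/-! The curve is `t ↦ (2 - t) e^{iθ(t)}` read in `ℝ²` through `ℂ ≃ ℝ²`. Its modulus tends to `2`,
which confines the cluster points to the circle. Conversely `θ` is continuous on `(0, ∞)` and
tends to `-∞` at `0⁺`, so by the intermediate value theorem it takes, on every `(0, ε]`, all the
values `α - 2πn` with `n` large; at those times the curve is `(2 - t) e^{iα} → 2 e^{iα}`. -/

open Real Filter Topology

/-- The curve `γ(t) = ((2 − t)·cos θ(t), (2 − t)·sin θ(t))` with
`θ(t) = t·k(t) + log t`, viewed in `ℝ²` with the Euclidean norm. -/
noncomputable def windingCurve (k : ℝ → ℝ) (t : ℝ) : EuclideanSpace ℝ (Fin 2) :=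
  (WithLp.equiv 2 (Fin 2 → ℝ)).symm
    ![(2 - t) * Real.cos (t * k t + Real.log t),
      (2 - t) * Real.sin (t * k t + Real.log t)]

open Set

theorem Homeomorph.mapClusterPt_comp_iff {α X Y : Type*} [TopologicalSpace X]
    [TopologicalSpace Y] (e : X ≃ₜ Y) {F : Filter α} {f : α → X} {y : Y} :
    MapClusterPt y F (e ∘ f) ↔ MapClusterPt (e.symm y) F f := by
  refine ⟨fun h ↦ ?_, fun h ↦ ?_⟩
  · simpa [Function.comp_def] using h.continuousAt_comp e.symm.continuous.continuousAt
  · simpa using h.continuousAt_comp e.continuous.continuousAt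

theorem MapClusterPt.mem_sphere_of_tendsto_dist {α X : Type*} [PseudoMetricSpace X]
    {F : Filter α} {f : α → X} {c z : X} {ρ : ℝ}
    (hf : Tendsto (fun t ↦ dist (f t) c) F (𝓝 ρ)) (h : MapClusterPt z F f) :
    z ∈ Metric.sphere c ρ :=
  eq_of_nhds_neBot <|
    (h.continuousAt_comp (continuous_id.dist continuous_const).continuousAt).clusterPt.mono hf

theorem Function.Periodic.not_bddBelow_preimage_singleton {β : Type*} {f : ℝ → β} {T : ℝ}
    (hf : Function.Periodic f T) (hT : 0 < T) (α : ℝ) : ¬BddBelow (f ⁻¹' {f α}) := by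
  refine not_bddBelow_iff.2 fun x ↦ ?_
  obtain ⟨n, hn⟩ := exists_nat_gt ((α - x) / T)
  refine ⟨α - n * T, hf.sub_nat_mul_eq n, ?_⟩
  linarith [(div_lt_iff₀ hT).1 hn]

theorem ContinuousOn.frequently_mem_of_tendsto_atBot {a : ℝ} {θ : ℝ → ℝ}
    (hθ : ContinuousOn θ (Ioi a)) (hlim : Tendsto θ (𝓝[>] a) atBot) {A : Set ℝ}
    (hA : ¬BddBelow A) : ∃ᶠ t in 𝓝[>] a, θ t ∈ A := by
  refine (nhdsGT_basis a).frequently_iff.2 fun b hab ↦ ?_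
  obtain ⟨c, hac, hcb⟩ := exists_between hab
  have hconn : IsPreconnected (θ '' Ioc a c) :=
    isPreconnected_Ioc.image θ (hθ.mono Ioc_subset_Ioi_self)
  obtain ⟨x, hxA, hxc⟩ := not_bddBelow_iff.1 hA (θ c)
  obtain ⟨s, ⟨hs, hsx⟩⟩ : ∃ s, (a < s ∧ s ≤ c) ∧ θ s < x :=
    ((eventually_mem_set.2 (Ioc_mem_nhdsGT hac)).and
      (hlim.eventually (eventually_lt_atBot x))).exists
  obtain ⟨t, ht, htx⟩ :=
    hconn.Icc_subset (mem_image_of_mem θ hs) (mem_image_of_mem θ ⟨hac, le_rfl⟩) ⟨hsx.le, hxc.le⟩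
  exact ⟨t, ⟨ht.1, ht.2.trans_lt hcb⟩, htx ▸ hxA⟩

theorem mapClusterPt_circleMap_iff {a R : ℝ} {r θ : ℝ → ℝ} (hθ : ContinuousOn θ (Ioi a))
    (hlim : Tendsto θ (𝓝[>] a) atBot) (hr : Tendsto r (𝓝[>] a) (𝓝 R)) {c z : ℂ} :
    MapClusterPt z (𝓝[>] a) (fun t ↦ circleMap c (r t) (θ t)) ↔ z ∈ Metric.sphere c |R| := by
  refine ⟨fun h ↦ h.mem_sphere_of_tendsto_dist ?_, fun hz ↦ ?_⟩
  · simpa [dist_eq_norm, circleMap_sub_center, norm_circleMap_zero] using hr.abs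
  obtain ⟨α, rfl⟩ : z ∈ range (circleMap c R) := range_circleMap c R ▸ hz
  -- the times `t` with `θ t ≡ α [PMOD 2π]`
  set S := θ ⁻¹' (circleMap 0 1 ⁻¹' {circleMap 0 1 α})
  have : (𝓝[>] a ⊓ 𝓟 S).NeBot := frequently_iff_neBot.1 <|
    hθ.frequently_mem_of_tendsto_atBot hlim
      ((periodic_circleMap 0 1).not_bddBelow_preimage_singleton two_pi_pos α)
  have hS : ∀ t ∈ S, circleMap c (r t) α = circleMap c (r t) (θ t) := fun t ht ↦ by
    simpa [circleMap] using congrArg (c + r t * ·) ht.symm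
  have hcont : Continuous fun ρ : ℝ ↦ circleMap c ρ α := by unfold circleMap; fun_prop
  refine (Tendsto.mapClusterPt (F := 𝓝[>] a ⊓ 𝓟 S) ?_).mono inf_le_left
  exact ((hcont.tendsto R).comp (hr.mono_left inf_le_left)).congr'
    (eventually_inf_principal.2 (.of_forall hS))

theorem windingCurve_eq_repr_circleMap (k : ℝ → ℝ) :
    windingCurve k = Complex.orthonormalBasisOneI.repr ∘
      fun t ↦ circleMap 0 (2 - t) (t * k t + log t) := by
  ext t i
  fin_cases i <;> simp [windingCurve, circleMap_zero_re, circleMap_zero_im]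

/-- The set of cluster points of `γ` as `t → 0⁺` is exactly the circle of radius `2`:
a point `p ∈ ℝ²` is a cluster point of `γ` along `𝓝[>] 0` iff `‖p‖ = 2`. -/
theorem mapClusterPt_windingCurve_iff (k : ℝ → ℝ) (hk : Continuous k)
    (p : EuclideanSpace ℝ (Fin 2)) :
    MapClusterPt p (𝓝[>] (0 : ℝ)) (windingCurve k) ↔ ‖p‖ = 2 := by
  have hc : Continuous fun t ↦ t * k t := by fun_prop
  have hθ : ContinuousOn (fun t ↦ t * k t + log t) (Ioi 0) :=
    hc.continuousOn.add (continuousOn_log.mono fun _ ht ↦ ne_of_gt ht)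
  have hlim : Tendsto (fun t ↦ t * k t + log t) (𝓝[>] 0) atBot :=
    ((hc.tendsto' 0 0 (zero_mul _)).mono_left nhdsWithin_le_nhds).add_atBot
      tendsto_log_nhdsGT_zero
  have hr : Tendsto (fun t : ℝ ↦ 2 - t) (𝓝[>] 0) (𝓝 2) :=
    ((continuous_sub_left 2).tendsto' 0 2 (sub_zero 2)).mono_left nhdsWithin_le_nhds
  rw [windingCurve_eq_repr_circleMap, ← LinearIsometryEquiv.coe_toHomeomorph,
    Homeomorph.mapClusterPt_comp_iff, mapClusterPt_circleMap_iff hθ hlim hr,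
    mem_sphere_zero_iff_norm, abs_two, LinearIsometryEquiv.coe_symm_toHomeomorph,
    LinearIsometryEquiv.norm_map]
end

section
/- Let k : ℝ → ℝ be continuously differentiable, and for t > 0 set θ(t) = t·k(t) + log t and γ(t) = ((2 − t)·cos θ(t), (2 − t)·sin θ(t)) ∈ ℝ². Then the unit tangent vector of γ converges to the unit tangent vector of the circle of radius 2 at the corresponding angle: ‖ γ'(t)/‖γ'(t)‖ − (−sin θ(t), cos θ(t)) ‖ → 0 as t → 0⁺. -/
/-!
In the polar frame `e_r = (cos θ, sin θ)`, `e_θ = (-sin θ, cos θ)` the velocity is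
`γ' = -e_r + b e_θ` with `b = (2 - t) θ'(t)`, and `θ'(t) = k t + t k'(t) + 1/t → ∞`, so `b → ∞`.
For `v ≠ 0` and a unit vector `w`, `‖v/‖v‖ - w‖² = 2 - 2⟪v, w⟫/‖v‖`, and here
`⟪γ', e_θ⟫/‖γ'‖ = b/√(1 + b²) → 1`.
-/

open Real Filter Topology
open scoped RealInnerProductSpace

section Normalize
variable {E : Type*} [NormedAddCommGroup E] [InnerProductSpace ℝ E]

theorem norm_inv_norm_smul_sub_sq {v w : E} (hv : v ≠ 0) (hw : ‖w‖ = 1) :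
    ‖‖v‖⁻¹ • v - w‖ ^ 2 = 2 - 2 * (⟪v, w⟫ / ‖v‖) := by
  have hunit : ‖‖v‖⁻¹ • v‖ = 1 := norm_smul_inv_norm (𝕜 := ℝ) hv
  rw [norm_sub_sq_real, hunit, hw, real_inner_smul_left]
  ring

theorem tendsto_norm_inv_norm_smul_sub_nhds_zero {α : Type*} {l : Filter α} {v w : α → E}
    (hv : ∀ᶠ a in l, v a ≠ 0) (hw : ∀ a, ‖w a‖ = 1)
    (h : Tendsto (fun a => ⟪v a, w a⟫ / ‖v a‖) l (𝓝 1)) :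
    Tendsto (fun a => ‖‖v a‖⁻¹ • v a - w a‖) l (𝓝 0) := by
  have hsq : Tendsto (fun a => ‖‖v a‖⁻¹ • v a - w a‖ ^ 2) l (𝓝 0) := by
    have hlim : Tendsto (fun a => 2 - 2 * (⟪v a, w a⟫ / ‖v a‖)) l (𝓝 0) := by
      simpa using (tendsto_const_nhds (x := (2 : ℝ))).sub (h.const_mul 2)
    refine hlim.congr' ?_
    filter_upwards [hv] with a ha using (norm_inv_norm_smul_sub_sq ha (hw a)).symm
  simpa [Real.sqrt_sq (norm_nonneg _)] using hsq.sqrt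

end Normalize

theorem tendsto_div_sqrt_add_sq_atTop (c : ℝ) :
    Tendsto (fun x : ℝ => x / √(c + x ^ 2)) atTop (𝓝 1) := by
  have hlim : Tendsto (fun x : ℝ => (√(c * (x ^ 2)⁻¹ + 1))⁻¹) atTop (𝓝 1) := by
    have h0 : Tendsto (fun x : ℝ => c * (x ^ 2)⁻¹ + 1) atTop (𝓝 1) := by
      simpa using ((tendsto_pow_atTop two_ne_zero).inv_tendsto_atTop.const_mul c).add_const 1
    simpa using h0.sqrt.inv₀ (by simp)
  refine hlim.congr' ?_
  filter_upwards [eventually_gt_atTop 0] with x hx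
  rw [show c + x ^ 2 = x ^ 2 * (c * (x ^ 2)⁻¹ + 1) by field_simp, Real.sqrt_mul (by positivity),
    Real.sqrt_sq hx.le]
  field_simp

noncomputable def radialUnit (θ : ℝ) : EuclideanSpace ℝ (Fin 2) :=
  (WithLp.equiv 2 (Fin 2 → ℝ)).symm ![Real.cos θ, Real.sin θ]

noncomputable def angularUnit (θ : ℝ) : EuclideanSpace ℝ (Fin 2) :=
  (WithLp.equiv 2 (Fin 2 → ℝ)).symm ![-Real.sin θ, Real.cos θ]

theorem norm_angularUnit (θ : ℝ) : ‖angularUnit θ‖ = 1 := by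
  simp [angularUnit, EuclideanSpace.norm_eq, Fin.sum_univ_two]

theorem norm_smul_radialUnit_add_smul_angularUnit (a b θ : ℝ) :
    ‖a • radialUnit θ + b • angularUnit θ‖ = √(a ^ 2 + b ^ 2) := by
  simp only [radialUnit, angularUnit, EuclideanSpace.norm_eq, Fin.sum_univ_two]
  congr 1
  simp only [WithLp.equiv_symm_apply, PiLp.add_apply, PiLp.smul_apply, Matrix.cons_val_zero,
    Matrix.cons_val_one, Matrix.cons_val_fin_one, smul_eq_mul, norm_eq_abs, sq_abs]
  linear_combination (a ^ 2 + b ^ 2) * Real.sin_sq_add_cos_sq θ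

theorem inner_smul_radialUnit_add_smul_angularUnit (a b θ : ℝ) :
    ⟪a • radialUnit θ + b • angularUnit θ, angularUnit θ⟫ = b := by
  simp only [radialUnit, angularUnit, WithLp.equiv_symm_apply, PiLp.inner_apply, PiLp.add_apply,
    PiLp.smul_apply, RCLike.inner_apply, conj_trivial, Fin.sum_univ_two, Matrix.cons_val_zero,
    Matrix.cons_val_one, Matrix.cons_val_fin_one, smul_eq_mul]
  linear_combination b * Real.sin_sq_add_cos_sq θ

theorem hasDerivAt_polar {r θ : ℝ → ℝ} {r' θ' t : ℝ} (hr : HasDerivAt r r' t)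
    (hθ : HasDerivAt θ θ' t) :
    HasDerivAt (fun t => (WithLp.equiv 2 (Fin 2 → ℝ)).symm
        ![r t * Real.cos (θ t), r t * Real.sin (θ t)])
      (r' • radialUnit (θ t) + (r t * θ') • angularUnit (θ t)) t := by
  have hcoord : HasDerivAt (fun t => ![r t * Real.cos (θ t), r t * Real.sin (θ t)])
      ![r' * Real.cos (θ t) - r t * θ' * Real.sin (θ t),
        r' * Real.sin (θ t) + r t * θ' * Real.cos (θ t)] t := by
    rw [hasDerivAt_pi, Fin.forall_fin_two]
    simp only [Matrix.cons_val_zero, Matrix.cons_val_one, Matrix.cons_val_fin_one]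
    exact ⟨(hr.mul hθ.cos).congr_deriv (by ring), (hr.mul hθ.sin).congr_deriv (by ring)⟩
  have hframe : r' • radialUnit (θ t) + (r t * θ') • angularUnit (θ t) =
      (WithLp.equiv 2 (Fin 2 → ℝ)).symm
        ![r' * Real.cos (θ t) - r t * θ' * Real.sin (θ t),
          r' * Real.sin (θ t) + r t * θ' * Real.cos (θ t)] := by
    ext i
    fin_cases i <;>
      simp only [radialUnit, angularUnit, WithLp.equiv_symm_apply, PiLp.add_apply, PiLp.smul_apply,
        smul_eq_mul, Fin.zero_eta, Fin.mk_one, Matrix.cons_val_zero, Matrix.cons_val_one,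
        Matrix.cons_val_fin_one]
    ring
  rw [hframe]
  exact ((PiLp.continuousLinearEquiv 2 ℝ (fun _ : Fin 2 => ℝ)).symm
      : (Fin 2 → ℝ) →L[ℝ] EuclideanSpace ℝ (Fin 2)).hasFDerivAt.comp_hasDerivAt t hcoord

/-- The angular speed `θ'(t)` of `θ(t) = t·k(t) + log t`. -/
noncomputable def windingSpeed (k : ℝ → ℝ) (t : ℝ) : ℝ := k t + t * deriv k t + t⁻¹

theorem hasDerivAt_windingCurve {k : ℝ → ℝ} {t : ℝ} (hk : DifferentiableAt ℝ k t) (ht : 0 < t) :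
    HasDerivAt (windingCurve k)
      ((-1 : ℝ) • radialUnit (t * k t + Real.log t) +
        ((2 - t) * windingSpeed k t) • angularUnit (t * k t + Real.log t)) t := by
  have hθ : HasDerivAt (fun t => t * k t + Real.log t) (windingSpeed k t) t := by
    refine (((hasDerivAt_id t).mul hk.hasDerivAt).add (Real.hasDerivAt_log ht.ne')).congr_deriv ?_
    simp [windingSpeed]
  exact hasDerivAt_polar ((hasDerivAt_id t).const_sub 2) hθ

theorem tendsto_windingSpeed_atTop {k : ℝ → ℝ} (hk : ContinuousAt k 0)
    (hk' : ContinuousAt (deriv k) 0) : Tendsto (windingSpeed k) (𝓝[>] 0) atTop := by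
  have hlim : Tendsto (fun t => k t + t * deriv k t) (𝓝[>] 0) (𝓝 (k 0 + 0 * deriv k 0)) :=
    (hk.tendsto.add (tendsto_id.mul hk'.tendsto)).mono_left nhdsWithin_le_nhds
  have hbdd : ∀ᶠ t in 𝓝[>] 0, k 0 + 0 * deriv k 0 - 1 ≤ k t + t * deriv k t :=
    hlim.eventually (eventually_ge_nhds (by linarith))
  exact tendsto_atTop_add_left_of_le' _ _ hbdd tendsto_inv_nhdsGT_zero

/-- As `t → 0⁺`, the unit tangent vector `γ'(t)/‖γ'(t)‖` of the curve `γ` approaches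
the positively oriented unit tangent vector `(−sin θ(t), cos θ(t))` of the circle at the
corresponding angle. -/
theorem windingCurve_tangent_tendsto_circle_tangent (k : ℝ → ℝ) (hk : ContDiff ℝ 1 k) :
    Filter.Tendsto
      (fun t : ℝ =>
        ‖(‖deriv (windingCurve k) t‖)⁻¹ • deriv (windingCurve k) t -
          (WithLp.equiv 2 (Fin 2 → ℝ)).symm
            ![-Real.sin (t * k t + Real.log t), Real.cos (t * k t + Real.log t)]‖)
      (𝓝[>] (0 : ℝ)) (𝓝 0) := by
  set b : ℝ → ℝ := fun t => (2 - t) * windingSpeed k t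
  have hderiv : ∀ t ∈ Set.Ioi (0 : ℝ), deriv (windingCurve k) t =
      (-1 : ℝ) • radialUnit (t * k t + Real.log t) + b t • angularUnit (t * k t + Real.log t) :=
    fun t ht => (hasDerivAt_windingCurve (hk.differentiable one_ne_zero t) ht).deriv
  have hb : Tendsto b (𝓝[>] 0) atTop :=
    ((tendsto_nhdsWithin_of_tendsto_nhds (tendsto_id (x := 𝓝 (0 : ℝ)))).const_sub 2).pos_mul_atTop
      (by norm_num)
      (tendsto_windingSpeed_atTop hk.continuous.continuousAt
        (hk.continuous_deriv le_rfl).continuousAt)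
  refine tendsto_norm_inv_norm_smul_sub_nhds_zero (w := fun t => angularUnit (t * k t + Real.log t))
    ?_ (fun t => norm_angularUnit _) ?_
  · filter_upwards [self_mem_nhdsWithin] with t ht
    rw [hderiv t ht, ← norm_pos_iff, norm_smul_radialUnit_add_smul_angularUnit]
    positivity
  · refine ((tendsto_div_sqrt_add_sq_atTop 1).comp hb).congr' ?_
    filter_upwards [self_mem_nhdsWithin] with t ht
    rw [hderiv t ht, inner_smul_radialUnit_add_smul_angularUnit,
      norm_smul_radialUnit_add_smul_angularUnit]
    norm_num
end
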